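/- arXiv:2206.10017 — 2 statements merged into one kernel-verified Lean document; each statement's English description precedes it below -/
import Mathlib

section
/- Let w ∈ S_n, let v ⊆ w be a subword of size m, and set u := perm(v) ∈ S_m. Then for every B ∈ BPD(w;v), the diagram φ_v^w(B) is a bumpless pipe dream of size m, its permutation is u, and it is minimal; that is, φ_v^w(B) ∈ mBPD(u). -/
/-!
Formalization of bumpless pipe dreams (BPDs).

A bumpless pipe dream of size `n` assigns one of six tiles (blank, horizontal,
vertical, crossing, r-elbow, j-elbow) to each cell of the `n × n` grid, subject
to matching and boundary conditions.  We additionally include a `bump` tile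
(an r-elbow together with a j-elbow in one cell), which is used only in
K-theoretic resolutions of BPDs.
-/

/-- The tile types: the six BPD tiles together with the bump tile used in
K-theoretic resolutions. -/
inductive Tile : Type
  | blank | horiz | vert | cross | bump | relbow | jelbow
  deriving DecidableEq

namespace Tile

/-- Does a pipe segment meet the south edge of the tile? -/
def south : Tile → Bool
  | vert => true | cross => true | bump => true | relbow => true
  | _ => false

/-- Does a pipe segment meet the north edge of the tile? -/
def north : Tile → Bool
  | vert => true | cross => true | bump => true | jelbow => true
  | _ => false

/-- Does a pipe segment meet the west edge of the tile? -/
def west : Tile → Bool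
  | horiz => true | cross => true | bump => true | jelbow => true
  | _ => false

/-- Does a pipe segment meet the east edge of the tile? -/
def east : Tile → Bool
  | horiz => true | cross => true | bump => true | relbow => true
  | _ => false

/-- A pipe entering the tile `t` (from the south if `d = true`, from the west if
`d = false`) exits through the east edge; otherwise it exits through the north
edge. -/
def exitEast (t : Tile) (d : Bool) : Bool :=
  if d then (t == relbow || t == bump) else !(t == jelbow || t == bump)

end Tile

/-- A tile diagram of size `n`: an assignment of a tile to each cell `(i, j)`
(row `i` from the top, column `j` from the left, `0`-indexed) of the `n × n`
grid, such that adjacent tiles match along shared edges, a segment meets the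
south boundary edge of every column and the east boundary edge of every row,
and no segment meets the north or west boundary of the grid.  (Cells outside
the grid are blank, as a normalization.)  A diagram may use the `bump` tile;
honest bumpless pipe dreams (`BPD`) do not. -/
structure Diagram (n : ℕ) : Type where
  tile : ℕ → ℕ → Tile
  vmatch : ∀ i j, i + 1 < n → j < n → (tile i j).south = (tile (i + 1) j).north
  hmatch : ∀ i j, i < n → j + 1 < n → (tile i j).east = (tile i (j + 1)).west
  bottom : ∀ j, j < n → (tile (n - 1) j).south = true
  right : ∀ i, i < n → (tile i (n - 1)).east = true
  top : ∀ j, j < n → (tile 0 j).north = false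
  left : ∀ i, i < n → (tile i 0).west = false
  outside : ∀ i j, ¬(i < n ∧ j < n) → tile i j = Tile.blank

/-- A bumpless pipe dream of size `n`: a diagram using only the six BPD tiles
(no bump tiles). -/
structure BPD (n : ℕ) extends Diagram n where
  nobump : ∀ i j, tile i j ≠ Tile.bump

namespace Diagram

variable {n : ℕ}

/-- One step of a pipe: a pipe currently in cell `(σ.1, σ.2.1)`, having entered
from the south if `σ.2.2 = true` (from the west otherwise), moves to the next
cell (east, entering from the west; or north, entering from the south). -/
def Step (D : Diagram n) (σ σ' : ℕ × ℕ × Bool) : Prop :=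
  σ.1 < n ∧ σ.2.1 < n ∧
    (if (D.tile σ.1 σ.2.1).exitEast σ.2.2 then
        σ.2.1 + 1 < n ∧ σ' = (σ.1, σ.2.1 + 1, false)
      else
        0 < σ.1 ∧ σ' = (σ.1 - 1, σ.2.1, true))

/-- The pipe entering at the bottom of column `y` passes through the cell `c`. -/
def Passes (D : Diagram n) (y : ℕ) (c : ℕ × ℕ) : Prop :=
  ∃ d : Bool, Relation.ReflTransGen D.Step (n - 1, y, true) (c.1, c.2, d)

/-- The pipe entering at the bottom of column `y` exits at the right of row `x`;
that is, `y → x` is a pipe of the diagram. -/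
def ExitsAt (D : Diagram n) (y x : ℕ) : Prop :=
  ∃ d : Bool, Relation.ReflTransGen D.Step (n - 1, y, true) (x, n - 1, d) ∧
    (D.tile x (n - 1)).exitEast d = true

/-- The permutation of the diagram is `w`: for every row `x`, `w x → x` is a
pipe of the diagram. -/
def HasPerm (D : Diagram n) (w : Equiv.Perm (Fin n)) : Prop :=
  ∀ x : Fin n, D.ExitsAt (w x) x

/-- The set of crossing tiles shared by the pipes entering at the bottoms of
columns `y₁` and `y₂`. -/
def SharedCrossings (D : Diagram n) (y₁ y₂ : ℕ) : Set (ℕ × ℕ) :=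
  {c | D.tile c.1 c.2 = Tile.cross ∧ D.Passes y₁ c ∧ D.Passes y₂ c}

/-- The diagram is reduced: any two distinct pipes pass through at most one
common crossing tile. -/
def Reduced (D : Diagram n) : Prop :=
  ∀ y₁ y₂, y₁ < n → y₂ < n → y₁ ≠ y₂ → (D.SharedCrossings y₁ y₂).Subsingleton

/-- `y → x` is a removable pipe of the diagram: it is a pipe, the tile at
`(x, y)` is an r-elbow, and it is the only r-elbow tile in row `x` and also the
only r-elbow tile in column `y`. -/
def RemovablePipe (D : Diagram n) (y x : ℕ) : Prop :=
  D.ExitsAt y x ∧ D.tile x y = Tile.relbow ∧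
    (∀ j, j ≠ y → D.tile x j ≠ Tile.relbow) ∧
    (∀ i, i ≠ x → D.tile i y ≠ Tile.relbow)

/-- The diagram is minimal: it has no removable pipe. -/
def Minimal (D : Diagram n) : Prop := ∀ y x, ¬ D.RemovablePipe y x

/-- The number of j-elbow tiles of the diagram. -/
def jcount (D : Diagram n) : ℕ :=
  ((Finset.range n ×ˢ Finset.range n).filter
    (fun c => D.tile c.1 c.2 = Tile.jelbow)).card

end Diagram

namespace BPD

variable {n m : ℕ}

/-- `B ∈ BPD(w; v)` for the subword `v` of `w` with (strictly increasing) index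
sequence `s : Fin m ↪o Fin n`: the permutation of `B` is `w` and the removable
pipes of `B` are precisely the pipes `w k → k` for the indices `k` of `w` not
used by the subword. -/
def InBPDv (B : BPD n) (w : Equiv.Perm (Fin n)) (s : Fin m ↪o Fin n) : Prop :=
  B.toDiagram.HasPerm w ∧
    ∀ y x : ℕ, B.toDiagram.RemovablePipe y x ↔
      ∃ k : Fin n, k ∉ Set.range s ∧ x = (k : ℕ) ∧ y = (w k : ℕ)

end BPD

/-- `c` comes strictly before `c'` in the (weakly north-east) traversal order of
a pipe: `c` is weakly south-west of `c'` and is a different cell. -/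
def Before (c c' : ℕ × ℕ) : Prop := c'.1 ≤ c.1 ∧ c.2 ≤ c'.2 ∧ c ≠ c'

namespace Diagram

/-- The pipes entering in columns `y₁` and `y₂` pass through a common crossing
tile strictly before the cell `c`. -/
def CrossedBefore {n : ℕ} (D : Diagram n) (y₁ y₂ : ℕ) (c : ℕ × ℕ) : Prop :=
  ∃ c' ∈ D.SharedCrossings y₁ y₂, Before c' c

end Diagram

/-- `D` is the K-theoretic resolution `B_K` of the bumpless pipe dream `B`:
each crossing tile of `B` either remains a crossing or becomes a bump in `D`
(all other tiles are unchanged), any two pipes of `D` cross at most once, and at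
a former crossing tile the two pipes of `D` passing through it bounce (bump)
there exactly when they have already crossed before reaching it. -/
structure IsKRes {n : ℕ} (B : BPD n) (D : Diagram n) : Prop where
  agree : ∀ i j, B.tile i j ≠ Tile.cross → D.tile i j = B.tile i j
  res : ∀ i j, B.tile i j = Tile.cross →
    D.tile i j = Tile.cross ∨ D.tile i j = Tile.bump
  once : D.Reduced
  bump_iff : ∀ i j y₁ y₂, y₁ < n → y₂ < n → y₁ ≠ y₂ →
    D.Passes y₁ (i, j) → D.Passes y₂ (i, j) → B.tile i j = Tile.cross →
    (D.tile i j = Tile.bump ↔ D.CrossedBefore y₁ y₂ (i, j))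

/-- The permutation `w` contains the pattern `p`. -/
def PermContains {n k : ℕ} (w : Equiv.Perm (Fin n)) (p : Equiv.Perm (Fin k)) : Prop :=
  ∃ f : Fin k ↪o Fin n, ∀ a b : Fin k, p a < p b ↔ w (f a) < w (f b)

/-- The pattern `1243` (as a permutation of `Fin 4`, `0`-indexed). -/
def p1243 : Equiv.Perm (Fin 4) := Equiv.swap 2 3

/-- The pattern `2143` (as a permutation of `Fin 4`, `0`-indexed). -/
def p2143 : Equiv.Perm (Fin 4) := Equiv.swap 0 1 * Equiv.swap 2 3
namespace Tile

theorem east_of_exit (t : Tile) (d : Bool) (h1 : t.exitEast d = true)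
    (h2 : (if d then t.south else t.west) = true) : t.east = true := by
  cases t <;> cases d <;> simp_all [exitEast, south, west, east]

theorem north_of_noexit (t : Tile) (d : Bool) (h1 : t.exitEast d ≠ true)
    (h2 : (if d then t.south else t.west) = true) : t.north = true := by
  cases t <;> cases d <;> simp_all [exitEast, south, west, north]

theorem ns_transparent (t : Tile) (h1 : t ≠ relbow) (h2 : t ≠ jelbow) (h3 : t ≠ bump) :
    t.north = t.south := by
  cases t <;> simp_all [north, south]

theorem we_transparent (t : Tile) (h1 : t ≠ relbow) (h2 : t ≠ jelbow) (h3 : t ≠ bump) :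
    t.west = t.east := by
  cases t <;> simp_all [west, east]

theorem exitE_false (t : Tile) (h1 : t ≠ relbow) (h3 : t ≠ bump) :
    t.exitEast true = false := by
  cases t <;> simp_all [exitEast]

theorem exitE_true (t : Tile) (h2 : t ≠ jelbow) (h3 : t ≠ bump) :
    t.exitEast false = true := by
  cases t <;> simp_all [exitEast]

end Tile

namespace Diagram

variable {n : ℕ}

theorem step_det (D : Diagram n) {σ σ₁ σ₂ : ℕ × ℕ × Bool}
    (h1 : D.Step σ σ₁) (h2 : D.Step σ σ₂) : σ₁ = σ₂ := by
  obtain ⟨_, _, h1⟩ := h1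
  obtain ⟨_, _, h2⟩ := h2
  by_cases h : (D.tile σ.1 σ.2.1).exitEast σ.2.2 = true
  · rw [if_pos h] at h1 h2; rw [h1.2, h2.2]
  · rw [if_neg h] at h1 h2; rw [h1.2, h2.2]

/-- A valid pipe state: in bounds and the pipe segment used to enter is present. -/
def ValidSt (D : Diagram n) (σ : ℕ × ℕ × Bool) : Prop :=
  σ.1 < n ∧ σ.2.1 < n ∧
    (if σ.2.2 then (D.tile σ.1 σ.2.1).south else (D.tile σ.1 σ.2.1).west) = true

theorem valid_step (D : Diagram n) {σ σ' : ℕ × ℕ × Bool}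
    (hv : D.ValidSt σ) (hs : D.Step σ σ') : D.ValidSt σ' := by
  obtain ⟨a, b, d⟩ := σ
  obtain ⟨ha, hb, hs⟩ := hs
  obtain ⟨-, -, hseg⟩ := hv
  by_cases h : (D.tile a b).exitEast d = true
  · rw [if_pos h] at hs
    obtain ⟨hb1, rfl⟩ := hs
    refine ⟨ha, hb1, ?_⟩
    simp only [if_neg (by simp : ¬ (false = true))]
    rw [← D.hmatch a b ha hb1]
    exact Tile.east_of_exit _ _ h hseg
  · rw [if_neg h] at hs
    obtain ⟨ha0, rfl⟩ := hs
    refine ⟨by omega, hb, ?_⟩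
    simp only [if_pos rfl]
    have hv : (D.tile (a-1) b).south = (D.tile (a-1+1) b).north :=
      D.vmatch (a-1) b (by omega) hb
    rw [show a - 1 + 1 = a by omega] at hv
    rw [hv]
    exact Tile.north_of_noexit _ _ h hseg

theorem valid_rtg (D : Diagram n) {σ σ' : ℕ × ℕ × Bool}
    (hv : D.ValidSt σ) (hs : Relation.ReflTransGen D.Step σ σ') : D.ValidSt σ' := by
  induction hs with
  | refl => exact hv
  | tail _ h2 ih => exact D.valid_step ih h2

theorem run_east (D : Diagram n) (a : ℕ) (ha : a < n) (c : ℕ) :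
    ∀ c', c ≤ c' → c' < n →
      (∀ b, c ≤ b → b < c' → (D.tile a b).exitEast false = true) →
      Relation.ReflTransGen D.Step (a, c, false) (a, c', false) := by
  intro c' h
  induction c', h using Nat.le_induction with
  | base => intro _ _; exact .refl
  | succ k hk ih =>
    intro hk1 ht
    refine .tail (ih (by omega) fun b h1 h2 => ht b h1 (by omega)) ?_
    exact ⟨ha, by show k < n; omega, by rw [if_pos (ht k hk (by omega))]; exact ⟨hk1, rfl⟩⟩

theorem run_north (D : Diagram n) (b : ℕ) (hb : b < n) (a' : ℕ) :
    ∀ a, a' ≤ a → a < n →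
      (∀ r, a' < r → r ≤ a → (D.tile r b).exitEast true = false) →
      Relation.ReflTransGen D.Step (a, b, true) (a', b, true) := by
  intro a h
  induction a, h using Nat.le_induction with
  | base => intro _ _; exact .refl
  | succ k hk ih =>
    intro hk1 ht
    refine .head ⟨hk1, hb, ?_⟩ (ih (by omega) fun r h1 h2 => ht r h1 (by omega))
    rw [if_neg (by rw [ht (k+1) (by omega) le_rfl]; simp)]
    exact ⟨by omega, rfl⟩

theorem chainS (D : Diagram n) (c : ℕ) (hc : c < n) (a : ℕ) :
    ∀ b, a ≤ b → b < n →
      (∀ r, a < r → r ≤ b → (D.tile r c).north = (D.tile r c).south) →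
      (D.tile a c).south = (D.tile b c).south := by
  intro b h
  induction b, h using Nat.le_induction with
  | base => intro _ _; rfl
  | succ k hk ih =>
    intro hk1 ht
    rw [ih (by omega) (fun r h1 h2 => ht r h1 (by omega)), D.vmatch k c hk1 hc,
      ht (k+1) (by omega) le_rfl]

theorem chainN (D : Diagram n) (c : ℕ) (hc : c < n) (a : ℕ) :
    ∀ b, a ≤ b → b < n →
      (∀ r, a ≤ r → r < b → (D.tile r c).north = (D.tile r c).south) →
      (D.tile a c).north = (D.tile b c).north := by
  intro b h
  induction b, h using Nat.le_induction with
  | base => intro _ _; rfl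
  | succ k hk ih =>
    intro hk1 ht
    rw [ih (by omega) (fun r h1 h2 => ht r h1 (by omega)), ht k hk (by omega),
      D.vmatch k c hk1 hc]

theorem chainE (D : Diagram n) (a : ℕ) (ha : a < n) (c : ℕ) :
    ∀ b, c ≤ b → b < n →
      (∀ j, c < j → j ≤ b → (D.tile a j).west = (D.tile a j).east) →
      (D.tile a c).east = (D.tile a b).east := by
  intro b h
  induction b, h using Nat.le_induction with
  | base => intro _ _; rfl
  | succ k hk ih =>
    intro hk1 ht
    rw [ih (by omega) (fun j h1 h2 => ht j h1 (by omega)), D.hmatch a k ha hk1,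
      ht (k+1) (by omega) le_rfl]

theorem chainW (D : Diagram n) (a : ℕ) (ha : a < n) (c : ℕ) :
    ∀ b, c ≤ b → b < n →
      (∀ j, c ≤ j → j < b → (D.tile a j).west = (D.tile a j).east) →
      (D.tile a c).west = (D.tile a b).west := by
  intro b h
  induction b, h using Nat.le_induction with
  | base => intro _ _; rfl
  | succ k hk ih =>
    intro hk1 ht
    rw [ih (by omega) (fun j h1 h2 => ht j h1 (by omega)), ht k hk (by omega),
      D.hmatch a k ha hk1]

theorem step_east (D : Diagram n) {a b : ℕ} {d : Bool} (ha : a < n) (hb : b < n)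
    (hb1 : b + 1 < n) (h : (D.tile a b).exitEast d = true) :
    D.Step (a, b, d) (a, b + 1, false) :=
  ⟨ha, hb, by rw [if_pos h]; exact ⟨hb1, rfl⟩⟩

theorem step_north (D : Diagram n) {a b : ℕ} {d : Bool} (ha : a < n) (hb : b < n)
    (ha0 : 0 < a) (h : ¬ (D.tile a b).exitEast d = true) :
    D.Step (a, b, d) (a - 1, b, true) :=
  ⟨ha, hb, by rw [if_neg h]; exact ⟨ha0, rfl⟩⟩

theorem rtg_exit_eq (D : Diagram n) {x : ℕ} {d : Bool} {τ : ℕ × ℕ × Bool}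
    (hex : (D.tile x (n-1)).exitEast d = true)
    (h : Relation.ReflTransGen D.Step (x, n-1, d) τ) : τ = (x, n-1, d) := by
  rcases Relation.ReflTransGen.cases_head h with h | ⟨σ', hs, _⟩
  · exact h.symm
  · exfalso
    obtain ⟨_, _, hs⟩ := hs
    rw [if_pos hex] at hs
    have hlt : n - 1 + 1 < n := hs.1
    omega

theorem exit_unique (D : Diagram n) {y x₁ x₂ : ℕ}
    (h1 : D.ExitsAt y x₁) (h2 : D.ExitsAt y x₂) : x₁ = x₂ := by
  obtain ⟨d₁, h1, e1⟩ := h1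
  obtain ⟨d₂, h2, e2⟩ := h2
  have hru : Relator.RightUnique D.Step := by
    intro a b c hb hc
    exact D.step_det hb hc
  rcases Relation.ReflTransGen.total_of_right_unique hru h1 h2 with h | h
  · have h' : x₂ = x₁ := congrArg (fun τ : ℕ × ℕ × Bool => τ.1) (D.rtg_exit_eq e1 h)
    exact h'.symm
  · exact congrArg (fun τ : ℕ × ℕ × Bool => τ.1) (D.rtg_exit_eq e2 h)

theorem pipe_progress {m : ℕ} (E : Diagram m) :
    ∀ (N a b : ℕ) (d : Bool), a + (m - b) ≤ N → E.ValidSt (a, b, d) →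
      ∃ x d', Relation.ReflTransGen E.Step (a, b, d) (x, m - 1, d') ∧
        (E.tile x (m-1)).exitEast d' = true ∧ x < m := by
  intro N
  induction N with
  | zero =>
    rintro a b d hμ ⟨ha, hb, hseg⟩
    exfalso
    have hb' : b < m := hb
    omega
  | succ N ih =>
    rintro a b d hμ ⟨ha, hb, hseg⟩
    have ha' : a < m := ha
    have hb' : b < m := hb
    by_cases h : (E.tile a b).exitEast d = true
    · by_cases hbm : b = m - 1
      · subst hbm; exact ⟨a, d, .refl, h, ha'⟩
      · have hb1 : b + 1 < m := by omega
        have hstep : E.Step (a, b, d) (a, b+1, false) :=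
          ⟨ha', hb', by rw [if_pos h]; exact ⟨hb1, rfl⟩⟩
        obtain ⟨x, d', hr, he, hx⟩ := ih a (b+1) false (by omega)
          (E.valid_step ⟨ha', hb', hseg⟩ hstep)
        exact ⟨x, d', .head hstep hr, he, hx⟩
    · have hn : (E.tile a b).north = true := Tile.north_of_noexit _ _ h hseg
      have ha0 : a ≠ 0 := by
        intro h0
        rw [h0, E.top b hb'] at hn
        simp at hn
      have hstep : E.Step (a, b, d) (a-1, b, true) :=
        ⟨ha', hb', by rw [if_neg h]; exact ⟨by omega, rfl⟩⟩
      obtain ⟨x, d', hr, he, hx⟩ := ih (a-1) b true (by omega)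
        (E.valid_step ⟨ha', hb', hseg⟩ hstep)
      exact ⟨x, d', .head hstep hr, he, hx⟩

end Diagram

namespace Diagram

variable {n : ℕ}

theorem row_relbow_left (D : Diagram n) (hnb : ∀ i j, D.tile i j ≠ Tile.bump)
    (r : ℕ) (hr : r < n) :
    ∀ j, j < n → (D.tile r j).west = true → ∃ j' < j, D.tile r j' = Tile.relbow := by
  intro j
  induction j with
  | zero =>
    intro _ hw
    rw [D.left r hr] at hw
    simp at hw
  | succ j ih =>
    intro hj hw
    have hjn : j < n := by omega
    rw [← D.hmatch r j hr hj] at hw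
    have hb := hnb r j
    rcases h : D.tile r j with _ | _ | _ | _ | _ | _ | _ <;> rw [h] at hw hb
    · simp [Tile.east] at hw
    · obtain ⟨j', hj', h'⟩ := ih hjn (by rw [h]; rfl)
      exact ⟨j', by omega, h'⟩
    · simp [Tile.east] at hw
    · obtain ⟨j', hj', h'⟩ := ih hjn (by rw [h]; rfl)
      exact ⟨j', by omega, h'⟩
    · exact absurd rfl hb
    · exact ⟨j, by omega, h⟩
    · simp [Tile.east] at hw

theorem row_relbow_right (D : Diagram n) (hnb : ∀ i j, D.tile i j ≠ Tile.bump)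
    (r : ℕ) (hr : r < n) :
    ∀ N j, j < n → n - j ≤ N → (D.tile r j).east = false →
      ∃ j', j < j' ∧ j' < n ∧ D.tile r j' = Tile.relbow := by
  intro N
  induction N with
  | zero => intro j hj hN _; omega
  | succ N ih =>
    intro j hj hN he
    rcases eq_or_lt_of_le (show j + 1 ≤ n from hj) with h1 | h1
    · rw [show j = n - 1 by omega, D.right r hr] at he
      simp at he
    · have hw : (D.tile r (j+1)).west = false := by rw [← D.hmatch r j hr h1]; exact he
      have hb := hnb r (j+1)
      rcases h : D.tile r (j+1) with _ | _ | _ | _ | _ | _ | _ <;> rw [h] at hw hb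
      · obtain ⟨j', h2, h3, h4⟩ := ih (j+1) h1 (by omega) (by rw [h]; rfl)
        exact ⟨j', by omega, h3, h4⟩
      · simp [Tile.west] at hw
      · obtain ⟨j', h2, h3, h4⟩ := ih (j+1) h1 (by omega) (by rw [h]; rfl)
        exact ⟨j', by omega, h3, h4⟩
      · simp [Tile.west] at hw
      · exact absurd rfl hb
      · exact ⟨j+1, by omega, h1, h⟩
      · simp [Tile.west] at hw

theorem col_relbow_above (D : Diagram n) (hnb : ∀ i j, D.tile i j ≠ Tile.bump)
    (c : ℕ) (hc : c < n) :
    ∀ i, i < n → (D.tile i c).north = true → ∃ i' < i, D.tile i' c = Tile.relbow := by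
  intro i
  induction i with
  | zero =>
    intro _ hw
    rw [D.top c hc] at hw
    simp at hw
  | succ i ih =>
    intro hi hw
    have hin : i < n := by omega
    rw [← D.vmatch i c hi hc] at hw
    have hb := hnb i c
    rcases h : D.tile i c with _ | _ | _ | _ | _ | _ | _ <;> rw [h] at hw hb
    · simp [Tile.south] at hw
    · simp [Tile.south] at hw
    · obtain ⟨i', hi', h'⟩ := ih hin (by rw [h]; rfl)
      exact ⟨i', by omega, h'⟩
    · obtain ⟨i', hi', h'⟩ := ih hin (by rw [h]; rfl)
      exact ⟨i', by omega, h'⟩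
    · exact absurd rfl hb
    · exact ⟨i, by omega, h⟩
    · simp [Tile.south] at hw

theorem col_relbow_below (D : Diagram n) (hnb : ∀ i j, D.tile i j ≠ Tile.bump)
    (c : ℕ) (hc : c < n) :
    ∀ N i, i < n → n - i ≤ N → (D.tile i c).south = false →
      ∃ i', i < i' ∧ i' < n ∧ D.tile i' c = Tile.relbow := by
  intro N
  induction N with
  | zero => intro i hi hN _; omega
  | succ N ih =>
    intro i hi hN he
    rcases eq_or_lt_of_le (show i + 1 ≤ n from hi) with h1 | h1
    · rw [show i = n - 1 by omega, D.bottom c hc] at he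
      simp at he
    · have hw : (D.tile (i+1) c).north = false := by rw [← D.vmatch i c h1 hc]; exact he
      have hb := hnb (i+1) c
      rcases h : D.tile (i+1) c with _ | _ | _ | _ | _ | _ | _ <;> rw [h] at hw hb
      · obtain ⟨i', h2, h3, h4⟩ := ih (i+1) h1 (by omega) (by rw [h]; rfl)
        exact ⟨i', by omega, h3, h4⟩
      · obtain ⟨i', h2, h3, h4⟩ := ih (i+1) h1 (by omega) (by rw [h]; rfl)
        exact ⟨i', by omega, h3, h4⟩
      · simp [Tile.north] at hw
      · simp [Tile.north] at hw
      · exact absurd rfl hb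
      · exact ⟨i+1, by omega, h1, h⟩
      · simp [Tile.north] at hw

end Diagram

section Kept

variable {n m : ℕ}

theorem not_kept_between (f : Fin m ↪o Fin n) {a b : Fin m} (hab : (a : ℕ) + 1 = (b : ℕ))
    {r : ℕ} (h1 : (f a : ℕ) < r) (h2 : r < (f b : ℕ)) : ∀ i : Fin m, (f i : ℕ) ≠ r := by
  intro i hi
  rcases le_or_gt i a with h | h
  · have := f.le_iff_le.mpr h
    rw [Fin.le_def] at this
    omega
  · have hbi : b ≤ i := by
      rw [Fin.le_def]
      rw [Fin.lt_def] at h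
      omega
    have := f.le_iff_le.mpr hbi
    rw [Fin.le_def] at this
    omega

theorem not_kept_low (f : Fin m ↪o Fin n) {a : Fin m} (ha : (a : ℕ) = 0)
    {r : ℕ} (h2 : r < (f a : ℕ)) : ∀ i : Fin m, (f i : ℕ) ≠ r := by
  intro i hi
  have hai : a ≤ i := by rw [Fin.le_def]; omega
  have := f.le_iff_le.mpr hai
  rw [Fin.le_def] at this
  omega

theorem not_kept_high (f : Fin m ↪o Fin n) {a : Fin m} (ha : (a : ℕ) = m - 1)
    {r : ℕ} (h1 : (f a : ℕ) < r) : ∀ i : Fin m, (f i : ℕ) ≠ r := by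
  intro i hi
  have hai : i ≤ a := by rw [Fin.le_def]; have := i.isLt; omega
  have := f.le_iff_le.mpr hai
  rw [Fin.le_def] at this
  omega

end Kept

/-- Lift an index of the subgrid to the corresponding index of the big grid. -/
def liftN {n m : ℕ} (f : Fin m ↪o Fin n) (x : ℕ) : ℕ :=
  if h : x < m then (f ⟨x, h⟩ : ℕ) else x

section Sim

variable {n m : ℕ}

theorem liftN_lt {f : Fin m ↪o Fin n} {x : ℕ} (h : x < m) : liftN f x = (f ⟨x, h⟩ : ℕ) :=
  dif_pos h

theorem sim_step (D : Diagram n) (s t : Fin m ↪o Fin n)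
    (D' : Diagram m) (htile : ∀ i j : Fin m, D'.tile i j = D.tile (s i) (t j))
    (hColT : ∀ (i : Fin m) (c : ℕ), c < n → (∀ j : Fin m, (t j : ℕ) ≠ c) →
      (D.tile (s i) c).exitEast false = true)
    (hRowT : ∀ (j : Fin m) (r : ℕ), r < n → (∀ i : Fin m, (s i : ℕ) ≠ r) →
      (D.tile r (t j)).exitEast true = false)
    {σ σ' : ℕ × ℕ × Bool} (h : D'.Step σ σ') :
    Relation.ReflTransGen D.Step (liftN s σ.1, liftN t σ.2.1, σ.2.2)
      (liftN s σ'.1, liftN t σ'.2.1, σ'.2.2) := by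
  obtain ⟨a, b, d⟩ := σ
  obtain ⟨ha, hb, h⟩ := h
  have ha' : a < m := ha
  have hb' : b < m := hb
  have htl := htile ⟨a, ha'⟩ ⟨b, hb'⟩
  simp only [Fin.val_mk] at htl
  by_cases hE : (D'.tile a b).exitEast d = true
  · rw [if_pos hE] at h
    obtain ⟨hb1, rfl⟩ := h
    have hb1 : b + 1 < m := hb1
    show Relation.ReflTransGen D.Step (liftN s a, liftN t b, d) (liftN s a, liftN t (b+1), false)
    rw [liftN_lt ha', liftN_lt hb', liftN_lt hb1]
    have hbb : (⟨b, hb'⟩ : Fin m) < ⟨b+1, hb1⟩ := by rw [Fin.mk_lt_mk]; omega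
    have htt : (t ⟨b, hb'⟩ : ℕ) < (t ⟨b+1, hb1⟩ : ℕ) := t.lt_iff_lt.mpr hbb
    have hE' : (D.tile (s ⟨a, ha'⟩) (t ⟨b, hb'⟩)).exitEast d = true := by
      rw [← htl]; exact hE
    refine .head (D.step_east (s ⟨a, ha'⟩).isLt (t ⟨b, hb'⟩).isLt
      (by have := (t ⟨b+1, hb1⟩).isLt; omega) hE') ?_
    refine D.run_east _ (s ⟨a, ha'⟩).isLt _ _ (by omega) (t ⟨b+1, hb1⟩).isLt ?_
    intro c h1 h2
    refine hColT ⟨a, ha'⟩ c (by have := (t ⟨b+1, hb1⟩).isLt; omega) ?_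
    exact not_kept_between t (a := ⟨b, hb'⟩) (b := ⟨b+1, hb1⟩) rfl (by omega) h2
  · rw [if_neg hE] at h
    obtain ⟨ha0, rfl⟩ := h
    have ha0 : 0 < a := ha0
    have ha1 : a - 1 < m := by omega
    show Relation.ReflTransGen D.Step (liftN s a, liftN t b, d) (liftN s (a-1), liftN t b, true)
    rw [liftN_lt ha', liftN_lt hb', liftN_lt ha1]
    have haa : (⟨a-1, ha1⟩ : Fin m) < ⟨a, ha'⟩ := by rw [Fin.mk_lt_mk]; omega
    have hss : (s ⟨a-1, ha1⟩ : ℕ) < (s ⟨a, ha'⟩ : ℕ) := s.lt_iff_lt.mpr haa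
    have hE' : ¬ (D.tile (s ⟨a, ha'⟩) (t ⟨b, hb'⟩)).exitEast d = true := by
      rw [← htl]; exact hE
    refine .head (D.step_north (s ⟨a, ha'⟩).isLt (t ⟨b, hb'⟩).isLt (by omega) hE') ?_
    refine D.run_north _ (t ⟨b, hb'⟩).isLt _ _ (by omega)
        (by have := (s ⟨a, ha'⟩).isLt; omega) ?_
    intro r h1 h2
    refine hRowT ⟨b, hb'⟩ r (by have := (s ⟨a, ha'⟩).isLt; omega) ?_
    exact not_kept_between s (a := ⟨a-1, ha1⟩) (b := ⟨a, ha'⟩) (by simp; omega) h1 (by omega)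

theorem sim_rtg (D : Diagram n) (s t : Fin m ↪o Fin n)
    (D' : Diagram m) (htile : ∀ i j : Fin m, D'.tile i j = D.tile (s i) (t j))
    (hColT : ∀ (i : Fin m) (c : ℕ), c < n → (∀ j : Fin m, (t j : ℕ) ≠ c) →
      (D.tile (s i) c).exitEast false = true)
    (hRowT : ∀ (j : Fin m) (r : ℕ), r < n → (∀ i : Fin m, (s i : ℕ) ≠ r) →
      (D.tile r (t j)).exitEast true = false)
    {σ σ' : ℕ × ℕ × Bool} (h : Relation.ReflTransGen D'.Step σ σ') :
    Relation.ReflTransGen D.Step (liftN s σ.1, liftN t σ.2.1, σ.2.2)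
      (liftN s σ'.1, liftN t σ'.2.1, σ'.2.2) := by
  induction h with
  | refl => exact .refl
  | tail _ h2 ih => exact ih.trans (sim_step D s t D' htile hColT hRowT h2)

end Sim

/-- Lemma `remov_min`.  Let `w ∈ S_n`, let `v ⊆ w` be a
subword of size `m` with strictly increasing index sequence `s` and strictly
increasing entry sequence `t`, and set `u := perm(v) ∈ S_m` (so that
`w (s i) = t (u i)` for all `i`).  Then for every `B ∈ BPD(w; v)`, the diagram
`φ_v^w(B)` — the `m × m` submatrix of `B` on rows `s₁, …, s_m` and columns
`t₁, …, t_m` — is a bumpless pipe dream of size `m`, its permutation is `u`,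
and it is minimal; that is, `φ_v^w(B) ∈ mBPD(u)`. -/
theorem removing_pipes_lands_in_mBPD {n m : ℕ} (w : Equiv.Perm (Fin n))
    (s t : Fin m ↪o Fin n) (u : Equiv.Perm (Fin m))
    (hst : ∀ i : Fin m, w (s i) = t (u i))
    (B : BPD n) (hB : B.InBPDv w s) :
    ∃ B' : BPD m, (∀ i j : Fin m, B'.tile i j = B.tile (s i) (t j)) ∧
      B'.toDiagram.HasPerm u ∧ B'.toDiagram.Minimal := by
  classical
  have hremov : ∀ k : Fin n, k ∉ Set.range s → B.toDiagram.RemovablePipe (w k) k :=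
    fun k hk => (hB.2 _ _).mpr ⟨k, hk, rfl, rfl⟩
  have hkc : ∀ (j : Fin m) (k : Fin n), k ∉ Set.range s → (t j : ℕ) ≠ (w k : ℕ) := by
    intro j k hk h
    apply hk
    refine ⟨u.symm j, ?_⟩
    apply w.injective
    rw [hst (u.symm j), Equiv.apply_symm_apply]
    exact Fin.val_injective h
  have hrow_nj : ∀ (k : Fin n), k ∉ Set.range s → ∀ j : ℕ, B.tile k j ≠ Tile.jelbow := by
    intro k hk j hj
    by_cases hjn : j < n
    · have hw : (B.tile k j).west = true := by rw [hj]; rfl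
      have he : (B.tile k j).east = false := by rw [hj]; rfl
      obtain ⟨j1, hj1lt, hj1⟩ :=
        B.toDiagram.row_relbow_left B.nobump k k.isLt j hjn hw
      obtain ⟨j2, hj2gt, hj2n, hj2⟩ :=
        B.toDiagram.row_relbow_right B.nobump k k.isLt n j hjn (by omega) he
      have e1 : j1 = (w k : ℕ) := by
        by_contra h
        exact (hremov k hk).2.2.1 j1 h hj1
      have e2 : j2 = (w k : ℕ) := by
        by_contra h
        exact (hremov k hk).2.2.1 j2 h hj2
      omega
    · rw [B.toDiagram.outside k j (fun h => hjn h.2)] at hj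
      exact Tile.noConfusion hj
  have hcol_nj : ∀ (k : Fin n), k ∉ Set.range s → ∀ i : ℕ, B.tile i (w k) ≠ Tile.jelbow := by
    intro k hk i hj
    by_cases hin : i < n
    · have hw : (B.tile i (w k)).north = true := by rw [hj]; rfl
      have he : (B.tile i (w k)).south = false := by rw [hj]; rfl
      obtain ⟨i1, hi1lt, hi1⟩ :=
        B.toDiagram.col_relbow_above B.nobump (w k) (w k).isLt i hin hw
      obtain ⟨i2, hi2gt, hi2n, hi2⟩ :=
        B.toDiagram.col_relbow_below B.nobump (w k) (w k).isLt n i hin (by omega) he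
      have e1 : i1 = (k : ℕ) := by
        by_contra h
        exact (hremov k hk).2.2.2 i1 h hi1
      have e2 : i2 = (k : ℕ) := by
        by_contra h
        exact (hremov k hk).2.2.2 i2 h hi2
      omega
    · rw [B.toDiagram.outside i (w k) (fun h => hin h.1)] at hj
      exact Tile.noConfusion hj
  have hRowT : ∀ (r : ℕ), r < n → (∀ i : Fin m, (s i : ℕ) ≠ r) → ∀ j : Fin m,
      (B.tile r (t j)).north = (B.tile r (t j)).south ∧
      (B.tile r (t j)).exitEast true = false := by
    intro r hr hrk j
    have hk : (⟨r, hr⟩ : Fin n) ∉ Set.range s := by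
      rintro ⟨i, hi⟩
      exact hrk i (by rw [hi])
    have h1 : B.tile r (t j) ≠ Tile.relbow :=
      (hremov _ hk).2.2.1 (t j) (hkc j _ hk)
    have h2 : B.tile r (t j) ≠ Tile.jelbow := hrow_nj _ hk (t j)
    have h3 : B.tile r (t j) ≠ Tile.bump := B.nobump _ _
    exact ⟨Tile.ns_transparent _ h1 h2 h3, Tile.exitE_false _ h1 h3⟩
  have hColPack : ∀ (c : ℕ), c < n → (∀ j : Fin m, (t j : ℕ) ≠ c) →
      (∀ i : ℕ, B.tile i c ≠ Tile.jelbow ∧ (B.tile i c).exitEast false = true) ∧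
      (∀ i : Fin m, (B.tile (s i) c).west = (B.tile (s i) c).east ∧
        B.tile (s i) c ≠ Tile.relbow) := by
    intro c hc hnk
    have hwk : (w (w.symm ⟨c, hc⟩) : ℕ) = c := by rw [Equiv.apply_symm_apply]
    have hk : w.symm ⟨c, hc⟩ ∉ Set.range s := by
      rintro ⟨i, hi⟩
      apply hnk (u i)
      rw [← hst i, hi, Equiv.apply_symm_apply]
    constructor
    · intro i
      have h2 : B.tile i c ≠ Tile.jelbow := by
        have := hcol_nj _ hk i
        rwa [hwk] at this
      exact ⟨h2, Tile.exitE_true _ h2 (B.nobump _ _)⟩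
    · intro i
      have hik : (s i : ℕ) ≠ (w.symm ⟨c, hc⟩ : ℕ) := by
        intro h
        exact hk ⟨i, Fin.val_injective h⟩
      have h1 : B.tile (s i) c ≠ Tile.relbow := by
        have := (hremov _ hk).2.2.2 (s i) hik
        rwa [hwk] at this
      have h2 : B.tile (s i) c ≠ Tile.jelbow := by
        have := hcol_nj _ hk (s i)
        rwa [hwk] at this
      exact ⟨Tile.we_transparent _ h1 h2 (B.nobump _ _), h1⟩
  -- the tiles of the subdiagram
  set T : ℕ → ℕ → Tile := fun i j =>
    if h : i < m ∧ j < m then B.tile (s ⟨i, h.1⟩) (t ⟨j, h.2⟩) else Tile.blank with hTdef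
  have hTval : ∀ (i j : ℕ) (hi : i < m) (hj : j < m),
      T i j = B.tile (s ⟨i, hi⟩) (t ⟨j, hj⟩) := by
    intro i j hi hj
    simp only [hTdef]
    rw [dif_pos ⟨hi, hj⟩]
  have hvm : ∀ i j, i + 1 < m → j < m → (T i j).south = (T (i + 1) j).north := by
    intro i j hi1 hj
    have hi : i < m := by omega
    rw [hTval i j hi hj, hTval (i+1) j hi1 hj]
    have hlt : (s ⟨i, hi⟩ : ℕ) < (s ⟨i+1, hi1⟩ : ℕ) :=
      s.lt_iff_lt.mpr (by rw [Fin.mk_lt_mk]; omega)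
    have hn2 := (s ⟨i+1, hi1⟩).isLt
    rw [B.toDiagram.vmatch (s ⟨i, hi⟩) (t ⟨j, hj⟩) (by omega) (t ⟨j, hj⟩).isLt]
    refine B.toDiagram.chainN (t ⟨j, hj⟩) (t ⟨j, hj⟩).isLt _ _ (by omega) hn2 ?_
    intro r h1 h2
    exact (hRowT r (by omega)
      (not_kept_between s (a := ⟨i, hi⟩) (b := ⟨i+1, hi1⟩) rfl (by omega) h2) ⟨j, hj⟩).1
  have hhm : ∀ i j, i < m → j + 1 < m → (T i j).east = (T i (j + 1)).west := by
    intro i j hi hj1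
    have hj : j < m := by omega
    rw [hTval i j hi hj, hTval i (j+1) hi hj1]
    have hlt : (t ⟨j, hj⟩ : ℕ) < (t ⟨j+1, hj1⟩ : ℕ) :=
      t.lt_iff_lt.mpr (by rw [Fin.mk_lt_mk]; omega)
    have hn2 := (t ⟨j+1, hj1⟩).isLt
    have e1 : (t ⟨j+1, hj1⟩ : ℕ) - 1 + 1 = (t ⟨j+1, hj1⟩ : ℕ) := by omega
    have hch := B.toDiagram.chainE (s ⟨i, hi⟩) (s ⟨i, hi⟩).isLt (t ⟨j, hj⟩)
      ((t ⟨j+1, hj1⟩ : ℕ) - 1) (by omega) (by omega) ?_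
    · rw [hch]
      have hm2 := B.toDiagram.hmatch (s ⟨i, hi⟩) ((t ⟨j+1, hj1⟩ : ℕ) - 1)
        (s ⟨i, hi⟩).isLt (by rw [e1]; exact hn2)
      rw [e1] at hm2
      exact hm2
    · intro c h1 h2
      exact ((hColPack c (by omega)
        (not_kept_between t (a := ⟨j, hj⟩) (b := ⟨j+1, hj1⟩) rfl h1 (by omega)) ).2 ⟨i, hi⟩).1
  have hbot : ∀ j, j < m → (T (m - 1) j).south = true := by
    intro j hj
    have hm0 : m - 1 < m := by omega
    rw [hTval (m-1) j hm0 hj]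
    have hn1 := (s ⟨m-1, hm0⟩).isLt
    have hch := B.toDiagram.chainS (t ⟨j, hj⟩) (t ⟨j, hj⟩).isLt (s ⟨m-1, hm0⟩)
      (n-1) (by omega) (by omega) ?_
    · rw [hch]
      exact B.toDiagram.bottom (t ⟨j, hj⟩) (t ⟨j, hj⟩).isLt
    · intro r h1 h2
      exact (hRowT r (by omega) (not_kept_high s (a := ⟨m-1, hm0⟩) rfl h1) ⟨j, hj⟩).1
  have hrt : ∀ i, i < m → (T i (m - 1)).east = true := by
    intro i hi
    have hm0 : m - 1 < m := by omega
    rw [hTval i (m-1) hi hm0]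
    have hn1 := (t ⟨m-1, hm0⟩).isLt
    have hch := B.toDiagram.chainE (s ⟨i, hi⟩) (s ⟨i, hi⟩).isLt (t ⟨m-1, hm0⟩)
      (n-1) (by omega) (by omega) ?_
    · rw [hch]
      exact B.toDiagram.right (s ⟨i, hi⟩) (s ⟨i, hi⟩).isLt
    · intro c h1 h2
      exact ((hColPack c (by omega) (not_kept_high t (a := ⟨m-1, hm0⟩) rfl h1)).2 ⟨i, hi⟩).1
  have htop : ∀ j, j < m → (T 0 j).north = false := by
    intro j hj
    have hm0 : 0 < m := by omega
    rw [hTval 0 j hm0 hj]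
    have hch := B.toDiagram.chainN (t ⟨j, hj⟩) (t ⟨j, hj⟩).isLt 0
      (s ⟨0, hm0⟩) (by omega) (s ⟨0, hm0⟩).isLt ?_
    · rw [← hch]
      exact B.toDiagram.top (t ⟨j, hj⟩) (t ⟨j, hj⟩).isLt
    · intro r h1 h2
      exact (hRowT r (by have := (s ⟨0, hm0⟩).isLt; omega)
        (not_kept_low s (a := ⟨0, hm0⟩) rfl h2) ⟨j, hj⟩).1
  have hlf : ∀ i, i < m → (T i 0).west = false := by
    intro i hi
    have hm0 : 0 < m := by omega
    rw [hTval i 0 hi hm0]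
    have hch := B.toDiagram.chainW (s ⟨i, hi⟩) (s ⟨i, hi⟩).isLt 0
      (t ⟨0, hm0⟩) (by omega) (t ⟨0, hm0⟩).isLt ?_
    · rw [← hch]
      exact B.toDiagram.left (s ⟨i, hi⟩) (s ⟨i, hi⟩).isLt
    · intro c h1 h2
      exact ((hColPack c (by have := (t ⟨0, hm0⟩).isLt; omega)
        (not_kept_low t (a := ⟨0, hm0⟩) rfl h2)).2 ⟨i, hi⟩).1
  have hout : ∀ i j, ¬(i < m ∧ j < m) → T i j = Tile.blank := by
    intro i j h
    simp only [hTdef]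
    rw [dif_neg h]
  set D' : Diagram m := ⟨T, hvm, hhm, hbot, hrt, htop, hlf, hout⟩ with hD'def
  have hnb' : ∀ i j, D'.tile i j ≠ Tile.bump := by
    intro i j
    show T i j ≠ _
    by_cases h : i < m ∧ j < m
    · rw [hTval i j h.1 h.2]
      exact B.nobump _ _
    · rw [hout i j h]
      exact Tile.noConfusion
  have htile' : ∀ i j : Fin m, D'.tile i j = B.tile (s i) (t j) := by
    intro i j
    show T i j = _
    rw [hTval i j i.isLt j.isLt]
  have hColT' : ∀ (i : Fin m) (c : ℕ), c < n → (∀ j : Fin m, (t j : ℕ) ≠ c) →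
      (B.tile (s i) c).exitEast false = true :=
    fun i c hc hnk => ((hColPack c hc hnk).1 (s i)).2
  have hRowT' : ∀ (j : Fin m) (r : ℕ), r < n → (∀ i : Fin m, (s i : ℕ) ≠ r) →
      (B.tile r (t j)).exitEast true = false :=
    fun j r hr hnk => (hRowT r hr hnk j).2
  -- main pipe correspondence
  have hexits : ∀ y : Fin m, ∃ x : Fin m,
      D'.ExitsAt y x ∧ B.toDiagram.ExitsAt (t y) (s x) := by
    intro y
    have hm0 : 0 < m := lt_of_le_of_lt (Nat.zero_le _) y.isLt
    have hm1 : m - 1 < m := by omega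
    have hv0 : D'.ValidSt (m - 1, (y : ℕ), true) :=
      ⟨hm1, y.isLt, show (D'.tile (m-1) (y : ℕ)).south = true from hbot (y : ℕ) y.isLt⟩
    obtain ⟨x, d, hr, he, hx⟩ :=
      D'.pipe_progress ((m - 1) + (m - (y : ℕ))) (m - 1) (y : ℕ) true le_rfl hv0
    refine ⟨⟨x, hx⟩, ⟨d, hr, he⟩, ?_⟩
    have hn0 := (s ⟨m-1, hm1⟩).isLt
    have hstart : Relation.ReflTransGen B.toDiagram.Step ((n - 1 : ℕ), (t y : ℕ), true)
        ((s ⟨m-1, hm1⟩ : ℕ), (t y : ℕ), true) := by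
      refine B.toDiagram.run_north (t y) (t y).isLt (s ⟨m-1, hm1⟩) (n-1)
        (by omega) (by omega) ?_
      intro r h1 h2
      exact hRowT' y r (by omega) (not_kept_high s (a := ⟨m-1, hm1⟩) rfl h1)
    have hmid' := sim_rtg B.toDiagram s t D' htile' hColT' hRowT' hr
    have hmid : Relation.ReflTransGen B.toDiagram.Step
        (liftN s (m-1), liftN t (y : ℕ), true) (liftN s x, liftN t (m-1), d) := hmid'
    rw [liftN_lt (f := s) hm1, liftN_lt (f := t) hm1, liftN_lt (f := t) y.isLt,
      liftN_lt (f := s) hx] at hmid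
    simp only [Fin.eta] at hmid
    have he' : (B.tile (s ⟨x, hx⟩) (t ⟨m-1, hm1⟩)).exitEast d = true := by
      rw [← htile' ⟨x, hx⟩ ⟨m-1, hm1⟩]
      exact he
    rcases eq_or_lt_of_le (show (t ⟨m-1, hm1⟩ : ℕ) + 1 ≤ n from (t ⟨m-1, hm1⟩).isLt)
      with hteq | htlt
    · rw [show (t ⟨m-1, hm1⟩ : ℕ) = n - 1 by omega] at hmid he'
      exact ⟨d, hstart.trans hmid, he'⟩
    · refine ⟨false, ?_, ?_⟩
      · refine (hstart.trans hmid).trans ?_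
        refine .head (B.toDiagram.step_east (s ⟨x, hx⟩).isLt (t ⟨m-1, hm1⟩).isLt
          (by omega) he') ?_
        refine B.toDiagram.run_east _ (s ⟨x, hx⟩).isLt ((t ⟨m-1, hm1⟩ : ℕ) + 1) (n-1)
          (by omega) (by omega) ?_
        intro c h1 h2
        exact hColT' ⟨x, hx⟩ c (by omega)
          (not_kept_high t (a := ⟨m-1, hm1⟩) rfl (by omega))
      · exact hColT' ⟨x, hx⟩ (n-1) (by omega)
          (not_kept_high t (a := ⟨m-1, hm1⟩) rfl (by omega))
  refine ⟨⟨D', hnb'⟩, htile', ?_, ?_⟩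
  · -- HasPerm
    intro x
    obtain ⟨x', hD'x, hBx⟩ := hexits (u x)
    have hBw := hB.1 (s x)
    rw [hst x] at hBw
    have heq : (s x' : ℕ) = (s x : ℕ) := B.toDiagram.exit_unique hBx hBw
    have hxx : x' = x := s.injective (Fin.val_injective heq)
    exact hxx ▸ hD'x
  · -- Minimal
    intro y x hrp
    obtain ⟨hex, hrel, hrowu, hcolu⟩ := hrp
    have hrelT : T x y = Tile.relbow := hrel
    have hxy : x < m ∧ y < m := by
      by_contra h
      rw [hout x y h] at hrelT
      exact Tile.noConfusion hrelT
    obtain ⟨hxm, hym⟩ := hxy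
    obtain ⟨x₁, hD'x₁, hBx₁⟩ := hexits ⟨y, hym⟩
    have hex' : D'.ExitsAt y x := hex
    have hxx1 : x = (x₁ : ℕ) := D'.exit_unique hex' hD'x₁
    have hx1F : x₁ = (⟨x, hxm⟩ : Fin m) := Fin.val_injective hxx1.symm
    have hrembig : B.toDiagram.RemovablePipe (t ⟨y, hym⟩) (s ⟨x, hxm⟩) := by
      refine ⟨?_, ?_, ?_, ?_⟩
      · exact hx1F ▸ hBx₁
      · rw [← htile' ⟨x, hxm⟩ ⟨y, hym⟩]
        exact hrel
      · intro c hc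
        by_cases hcn : c < n
        · by_cases hck : ∀ j : Fin m, (t j : ℕ) ≠ c
          · exact ((hColPack c hcn hck).2 ⟨x, hxm⟩).2
          · push_neg at hck
            obtain ⟨j, hj⟩ := hck
            have hjy : (j : ℕ) ≠ y := by
              intro h
              apply hc
              rw [← hj]
              congr 2
              exact Fin.val_injective h
            have hrj := hrowu (j : ℕ) hjy
            rw [← hj, ← htile' ⟨x, hxm⟩ j]
            exact hrj
        · rw [B.toDiagram.outside _ c (fun hh => hcn hh.2)]
          exact Tile.noConfusion
      · intro r hr
        by_cases hrn : r < n
        · by_cases hrk : ∀ i : Fin m, (s i : ℕ) ≠ r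
          · have hk : (⟨r, hrn⟩ : Fin n) ∉ Set.range s := by
              rintro ⟨i, hi⟩
              exact hrk i (by rw [hi])
            exact (hremov _ hk).2.2.1 (t ⟨y, hym⟩) (hkc ⟨y, hym⟩ _ hk)
          · push_neg at hrk
            obtain ⟨i, hi⟩ := hrk
            have hix : (i : ℕ) ≠ x := by
              intro h
              apply hr
              rw [← hi]
              congr 2
              exact Fin.val_injective h
            have hci := hcolu (i : ℕ) hix
            rw [← hi, ← htile' i ⟨y, hym⟩]
            exact hci
        · rw [B.toDiagram.outside r _ (fun hh => hrn hh.1)]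
          exact Tile.noConfusion
    obtain ⟨k, hk, hxk, hyk⟩ := (hB.2 _ _).mp hrembig
    exact hk ⟨⟨x, hxm⟩, (Fin.val_injective hxk.symm).symm⟩
end

section
/- Let w ∈ S_n, let v ⊆ w be a subword of size m, and set u := perm(v) ∈ S_m. Then the map φ_v^w : BPD(w;v) → mBPD(u) is a bijection. -/
namespace BPDAux
open Tile

/-- Reconstruct a tile from its four edges. -/
def mk4 : Bool → Bool → Bool → Bool → Tile
  | false, false, false, false => .blank
  | false, false, true, true => .horiz
  | true, true, false, false => .vert
  | true, true, true, true => .cross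
  | false, true, false, true => .relbow
  | true, false, true, false => .jelbow
  | _, _, _, _ => .blank

/-- The valid edge patterns. -/
def Valid (N S W E : Bool) : Prop :=
  (N = S ∧ W = E) ∨ (N = false ∧ S = true ∧ W = false ∧ E = true) ∨
    (N = true ∧ S = false ∧ W = true ∧ E = false)

lemma mk4_tile (x : Tile) (h : x ≠ .bump) :
    mk4 x.north x.south x.west x.east = x := by
  cases x <;> first | rfl | exact absurd rfl h

lemma valid_tile (x : Tile) (h : x ≠ .bump) : Valid x.north x.south x.west x.east := by
  cases x <;> simp [Valid, north, south, west, east] <;> exact absurd rfl h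

lemma mk4_ne_bump (N S W E : Bool) : mk4 N S W E ≠ .bump := by
  rcases N <;> rcases S <;> rcases W <;> rcases E <;> simp [mk4]

lemma mk4_north {N S W E : Bool} (h : Valid N S W E) : (mk4 N S W E).north = N := by
  rcases N <;> rcases S <;> rcases W <;> rcases E <;> simp_all [Valid, mk4, north]

lemma mk4_south {N S W E : Bool} (h : Valid N S W E) : (mk4 N S W E).south = S := by
  rcases N <;> rcases S <;> rcases W <;> rcases E <;> simp_all [Valid, mk4, south]

lemma mk4_west {N S W E : Bool} (h : Valid N S W E) : (mk4 N S W E).west = W := by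
  rcases N <;> rcases S <;> rcases W <;> rcases E <;> simp_all [Valid, mk4, west]

lemma mk4_east {N S W E : Bool} (h : Valid N S W E) : (mk4 N S W E).east = E := by
  rcases N <;> rcases S <;> rcases W <;> rcases E <;> simp_all [Valid, mk4, east]

lemma south_eq_false (x : Tile) (hb : x ≠ .bump) (hn : x.north = false)
    (hr : x ≠ .relbow) : x.south = false := by
  cases x <;> simp_all [north, south]

lemma east_eq_false (x : Tile) (hb : x ≠ .bump) (hw : x.west = false)
    (hr : x ≠ .relbow) : x.east = false := by
  cases x <;> simp_all [west, east]

lemma north_of_south (x : Tile) (hb : x ≠ .bump) (hs : x.south = true)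
    (hr : x ≠ .relbow) : x.north = true := by
  cases x <;> simp_all [north, south]

lemma east_of_west (x : Tile) (hb : x ≠ .bump) (hw : x.west = true)
    (hj : x ≠ .jelbow) : x.east = true := by
  cases x <;> simp_all [west, east]

lemma ns_of_we (x : Tile) (hb : x ≠ .bump) (h : x.west = x.east) :
    x.north = x.south := by
  cases x <;> simp_all [north, south, west, east]

lemma ne_relbow_of_we (x : Tile) (h : x.west = x.east) : x ≠ .relbow := by
  cases x <;> simp_all [west, east]

lemma ne_jelbow_of_we (x : Tile) (h : x.west = x.east) : x ≠ .jelbow := by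
  cases x <;> simp_all [west, east]

lemma exitEast_true_eq (x : Tile) (hb : x ≠ .bump) :
    x.exitEast true = decide (x = .relbow) := by
  cases x <;> simp_all [Tile.exitEast]

lemma exitEast_false_eq (x : Tile) (hb : x ≠ .bump) :
    x.exitEast false = !decide (x = .jelbow) := by
  cases x <;> simp_all [Tile.exitEast]

lemma relbow_of_exit (x : Tile) (hb : x ≠ .bump) (hs : x.south = true)
    (he : x.exitEast true = true) : x = .relbow := by
  cases x <;> simp_all [Tile.exitEast, south]

lemma jelbow_of_exit (x : Tile) (hb : x ≠ .bump) (hw : x.west = true)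
    (he : x.exitEast false = false) : x = .jelbow := by
  cases x <;> simp_all [Tile.exitEast, west]

lemma east_of_relbow : Tile.relbow.east = true := rfl
lemma north_of_jelbow : Tile.jelbow.north = true := rfl

end BPDAux
namespace BPDAux
open Tile

section Generic
variable {n : ℕ} (B : BPD n)

lemma north_eq (i j : ℕ) (hi : i < n) (hj : j < n) :
    (B.tile i j).north = if i = 0 then false else (B.tile (i-1) j).south := by
  split
  · subst ‹i = 0›; exact B.top j hj
  · have hi1 : i - 1 + 1 = i := by omega
    have h := B.vmatch (i-1) j (by omega) hj
    rw [hi1] at h; exact h.symm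

lemma west_eq (i j : ℕ) (hi : i < n) (hj : j < n) :
    (B.tile i j).west = if j = 0 then false else (B.tile i (j-1)).east := by
  split
  · subst ‹j = 0›; exact B.left i hi
  · have hj1 : j - 1 + 1 = j := by omega
    have h := B.hmatch i (j-1) hi (by omega)
    rw [hj1] at h; exact h.symm

lemma south_false_propagate (j : ℕ) (hj : j < n) :
    ∀ i2 i1, i1 ≤ i2 → i2 < n →
      (∀ i', i1 < i' → i' ≤ i2 → B.tile i' j ≠ .relbow) →
      (B.tile i1 j).south = false → (B.tile i2 j).south = false := by
  intro i2
  induction i2 with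
  | zero => intro i1 h _ _ hs; interval_cases i1; exact hs
  | succ i ih =>
    intro i1 h hlt hnr hs
    rcases Nat.eq_or_lt_of_le h with h' | h'
    · subst h'; exact hs
    · have hsi : (B.tile i j).south = false :=
        ih i1 (by omega) (by omega) (fun i' h1 h2 => hnr i' h1 (by omega)) hs
      have hn : (B.tile (i+1) j).north = false := by
        rw [north_eq B (i+1) j hlt hj]; simpa using hsi
      exact south_eq_false _ (B.nobump _ _) hn (hnr (i+1) (by omega) (by omega))

lemma east_false_propagate (i : ℕ) (hi : i < n) :
    ∀ j2 j1, j1 ≤ j2 → j2 < n →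
      (∀ j', j1 < j' → j' ≤ j2 → B.tile i j' ≠ .relbow) →
      (B.tile i j1).east = false → (B.tile i j2).east = false := by
  intro j2
  induction j2 with
  | zero => intro j1 h _ _ hs; interval_cases j1; exact hs
  | succ j ih =>
    intro j1 h hlt hnr hs
    rcases Nat.eq_or_lt_of_le h with h' | h'
    · subst h'; exact hs
    · have hsi : (B.tile i j).east = false :=
        ih j1 (by omega) (by omega) (fun j' h1 h2 => hnr j' h1 (by omega)) hs
      have hn : (B.tile i (j+1)).west = false := by
        rw [west_eq B i (j+1) hi hlt]; simpa using hsi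
      exact east_eq_false _ (B.nobump _ _) hn (hnr (j+1) (by omega) (by omega))

/-- In a column whose unique r-elbow is in row `k`, the vertical segments are
exactly those below row `k`. -/
lemma col_formula (j k : ℕ) (hj : j < n) (hk : k < n)
    (hrel : B.tile k j = .relbow) (huniq : ∀ i, i ≠ k → B.tile i j ≠ .relbow) :
    ∀ i, i < n → (B.tile i j).south = decide (k ≤ i) := by
  have part1 : ∀ i, i < k → (B.tile i j).south = false := by
    intro i
    induction i with
    | zero =>
      intro hik
      have hn : (B.tile 0 j).north = false := B.top j hj
      exact south_eq_false _ (B.nobump _ _) hn (huniq 0 (by omega))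
    | succ i ih =>
      intro hik
      have hn : (B.tile (i+1) j).north = false := by
        rw [north_eq B (i+1) j (by omega) hj]; simpa using ih (by omega)
      exact south_eq_false _ (B.nobump _ _) hn (huniq (i+1) (by omega))
  intro i hi
  rcases lt_trichotomy i k with h | h | h
  · rw [part1 i h]; simp; omega
  · subst h; rw [hrel]; simp [south]
  · by_contra hc
    have hc' : (B.tile i j).south = false := by
      simpa [Nat.le_of_lt h] using hc
    have := south_false_propagate B j hj (n-1) i (by omega) (by omega)
      (fun i' h1 h2 => huniq i' (by omega)) hc'
    rw [B.bottom j hj] at this; exact absurd this (by simp)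

/-- In a row whose unique r-elbow is in column `k`, the horizontal segments are
exactly those to the right of column `k`. -/
lemma row_formula (i k : ℕ) (hi : i < n) (hk : k < n)
    (hrel : B.tile i k = .relbow) (huniq : ∀ j, j ≠ k → B.tile i j ≠ .relbow) :
    ∀ j, j < n → (B.tile i j).east = decide (k ≤ j) := by
  have part1 : ∀ j, j < k → (B.tile i j).east = false := by
    intro j
    induction j with
    | zero =>
      intro hik
      have hn : (B.tile i 0).west = false := B.left i hi
      exact east_eq_false _ (B.nobump _ _) hn (huniq 0 (by omega))
    | succ j ih =>
      intro hik
      have hn : (B.tile i (j+1)).west = false := by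
        rw [west_eq B i (j+1) hi (by omega)]; simpa using ih (by omega)
      exact east_eq_false _ (B.nobump _ _) hn (huniq (j+1) (by omega))
  intro j hjn
  rcases lt_trichotomy j k with h | h | h
  · rw [part1 j h]; simp; omega
  · subst h; rw [hrel]; simp [east]
  · by_contra hc
    have hc' : (B.tile i j).east = false := by
      simpa [Nat.le_of_lt h] using hc
    have := east_false_propagate B i hi (n-1) j (by omega) (by omega)
      (fun j' h1 h2 => huniq j' (by omega)) hc'
    rw [B.right i hi] at this; exact absurd this (by simp)

end Generic
end BPDAux
namespace BPDAux
open Tile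

section Walks
variable {n : ℕ}

lemma step_det {D : Diagram n} {σ σ1 σ2 : ℕ × ℕ × Bool}
    (h1 : D.Step σ σ1) (h2 : D.Step σ σ2) : σ1 = σ2 := by
  obtain ⟨_, _, h1'⟩ := h1
  obtain ⟨_, _, h2'⟩ := h2
  by_cases hE : (D.tile σ.1 σ.2.1).exitEast σ.2.2 = true
  · rw [if_pos hE] at h1' h2'; exact h1'.2.trans h2'.2.symm
  · rw [if_neg hE] at h1' h2'; exact h1'.2.trans h2'.2.symm

lemma reach_det {D : Diagram n} {b c : ℕ × ℕ × Bool}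
    (sb : ∀ σ, ¬ D.Step b σ) (sc : ∀ σ, ¬ D.Step c σ) :
    ∀ {a : ℕ × ℕ × Bool}, Relation.ReflTransGen D.Step a b →
      Relation.ReflTransGen D.Step a c → b = c := by
  intro a hb
  induction hb using Relation.ReflTransGen.head_induction_on with
  | refl =>
    intro hc
    rcases (Relation.ReflTransGen.cases_head hc) with h | ⟨d, hd, _⟩
    · exact h
    · exact absurd hd (sb d)
  | head hstep _ ih =>
    intro hc
    rcases (Relation.ReflTransGen.cases_head hc) with h | ⟨d, hd, hdc⟩
    · subst h; exact absurd hstep (sc _)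
    · rw [step_det hstep hd] at *; exact ih hdc

lemma exit_stuck {D : Diagram n} {x : ℕ} {d : Bool}
    (h : (D.tile x (n-1)).exitEast d = true) :
    ∀ σ, ¬ D.Step (x, n-1, d) σ := by
  intro σ hs
  obtain ⟨h1, h2, h3⟩ := hs
  rw [h] at h3
  simp only [if_pos] at h3
  have h2' : n - 1 < n := h2
  omega

lemma exitsAt_unique {D : Diagram n} {y x x' : ℕ}
    (h : D.ExitsAt y x) (h' : D.ExitsAt y x') : x = x' := by
  obtain ⟨d, hr, he⟩ := h
  obtain ⟨d', hr', he'⟩ := h'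
  have := reach_det (exit_stuck he) (exit_stuck he') hr hr'
  exact congrArg Prod.fst this

/-- Walk invariant: in bounds, and the pipe segment is really there. -/
def Inv (B : BPD n) (σ : ℕ × ℕ × Bool) : Prop :=
  σ.1 < n ∧ σ.2.1 < n ∧
    (if σ.2.2 then (B.tile σ.1 σ.2.1).south = true else (B.tile σ.1 σ.2.1).west = true)

lemma inv_step {B : BPD n} {σ σ' : ℕ × ℕ × Bool} (hσ : Inv B σ)
    (h : B.toDiagram.Step σ σ') : Inv B σ' := by
  obtain ⟨i, j, d⟩ := σ
  obtain ⟨hi, hj, hstep⟩ := h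
  obtain ⟨_, _, hseg⟩ := hσ
  simp only at hi hj hseg ⊢
  by_cases hE : (B.tile i j).exitEast d = true
  · rw [if_pos hE] at hstep
    obtain ⟨hjn, rfl⟩ := hstep
    have heast : (B.tile i j).east = true := by
      cases d with
      | true =>
        have := relbow_of_exit _ (B.nobump i j) (by simpa using hseg) hE
        rw [this]; rfl
      | false =>
        refine east_of_west _ (B.nobump i j) (by simpa using hseg) ?_
        intro hjel
        rw [exitEast_false_eq _ (B.nobump i j), hjel] at hE
        simp at hE
    refine ⟨hi, hjn, ?_⟩
    simp only [if_neg Bool.false_ne_true]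
    rw [← B.hmatch i j hi hjn]
    exact heast
  · rw [if_neg hE] at hstep
    obtain ⟨hipos, rfl⟩ := hstep
    have hnorth : (B.tile i j).north = true := by
      cases d with
      | true =>
        refine north_of_south _ (B.nobump i j) (by simpa using hseg) ?_
        intro hrel
        rw [exitEast_true_eq _ (B.nobump i j), hrel] at hE
        simp at hE
      | false =>
        have := jelbow_of_exit _ (B.nobump i j) (by simpa using hseg)
          (by simpa using hE)
        rw [this]; rfl
    refine ⟨by omega, hj, ?_⟩
    simp only [if_pos rfl]
    have := B.vmatch (i-1) j (by omega) hj
    rw [this]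
    have : i - 1 + 1 = i := by omega
    rw [this]; exact hnorth

lemma exists_exit_aux (B : BPD n) :
    ∀ (N : ℕ) (σ : ℕ × ℕ × Bool), σ.1 + (n - σ.2.1) ≤ N → Inv B σ →
      ∃ x d, Relation.ReflTransGen B.toDiagram.Step σ (x, n-1, d) ∧
        (B.tile x (n-1)).exitEast d = true ∧ x < n := by
  intro N
  induction N with
  | zero =>
    intro σ hm hinv
    exfalso; obtain ⟨h1, h2, _⟩ := hinv; omega
  | succ N ih =>
    rintro ⟨i, j, d⟩ hm hinv
    obtain ⟨hi, hj, hseg⟩ := hinv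
    dsimp only at hi hj hseg hm
    by_cases hE : (B.tile i j).exitEast d = true
    · by_cases hjn : j = n - 1
      · exact ⟨i, d, by rw [hjn], by rw [← hjn]; exact hE, hi⟩
      · have hstep : B.toDiagram.Step (i, j, d) (i, j+1, false) :=
          ⟨hi, hj, by rw [if_pos hE]; exact ⟨show j + 1 < n by omega, rfl⟩⟩
        have hinv' := inv_step ⟨hi, hj, hseg⟩ hstep
        obtain ⟨x, d', hr, he, hx⟩ := ih (i, j+1, false) (by show i + (n - (j+1)) ≤ N; omega) hinv'
        exact ⟨x, d', Relation.ReflTransGen.head hstep hr, he, hx⟩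
    · have hipos : 0 < i := by
        by_contra hc
        have hi0 : i = 0 := by omega
        subst hi0
        have htop : (B.tile 0 j).north = false := B.top j hj
        cases d with
        | true =>
          have := north_of_south _ (B.nobump 0 j) (by simpa using hseg) ?_
          · rw [this] at htop; simp at htop
          · intro hrel
            rw [exitEast_true_eq _ (B.nobump 0 j), hrel] at hE
            simp at hE
        | false =>
          have := jelbow_of_exit _ (B.nobump 0 j) (by simpa using hseg)
            (by simpa using hE)
          rw [this] at htop; simp [north] at htop
      have hstep : B.toDiagram.Step (i, j, d) (i-1, j, true) :=
        ⟨hi, hj, by rw [if_neg hE]; exact ⟨hipos, rfl⟩⟩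
      have hinv' := inv_step ⟨hi, hj, hseg⟩ hstep
      obtain ⟨x, d', hr, he, hx⟩ := ih (i-1, j, true) (by show (i-1) + (n - j) ≤ N; omega) hinv'
      exact ⟨x, d', Relation.ReflTransGen.head hstep hr, he, hx⟩

/-- Every walk from the bottom of a column exits somewhere at the right. -/
lemma exists_exit (B : BPD n) (y : ℕ) (hy : y < n) :
    ∃ x, x < n ∧ B.toDiagram.ExitsAt y x := by
  have hinv : Inv B (n-1, y, true) := by
    refine ⟨by omega, hy, ?_⟩
    simp only [if_pos rfl]
    exact B.bottom y hy
  obtain ⟨x, d, hr, he, hx⟩ := exists_exit_aux B (n - 1 + (n - y)) (n-1, y, true) le_rfl hinv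
  exact ⟨x, hx, d, hr, he⟩

/-- Climb north along a column without r-elbows. -/
lemma climb (B : BPD n) (j : ℕ) (hj : j < n) :
    ∀ i1 i2, i2 ≤ i1 → i1 < n →
      (∀ i', i2 < i' → i' ≤ i1 → B.tile i' j ≠ .relbow) →
      Relation.ReflTransGen B.toDiagram.Step (i1, j, true) (i2, j, true) := by
  intro i1
  induction i1 with
  | zero =>
    intro i2 h _ _; interval_cases i2; exact Relation.ReflTransGen.refl
  | succ i ih =>
    intro i2 h hlt hnr
    rcases Nat.eq_or_lt_of_le h with h' | h'
    · subst h'; exact Relation.ReflTransGen.refl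
    · have hE : (B.tile (i+1) j).exitEast true = false := by
        rw [exitEast_true_eq _ (B.nobump _ _)]
        simpa using hnr (i+1) (by omega) (by omega)
      have hstep : B.toDiagram.Step (i+1, j, true) (i, j, true) :=
        ⟨hlt, hj, by rw [if_neg (by simp [hE])]; exact ⟨by omega, rfl⟩⟩
      exact Relation.ReflTransGen.head hstep
        (ih i2 (by omega) (by omega) (fun i' h1 h2 => hnr i' h1 (by omega)))

/-- Crawl east along a row without j-elbows. -/
lemma crawl (B : BPD n) (i : ℕ) (hi : i < n) :
    ∀ j2 j1, j1 ≤ j2 → j2 < n →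
      (∀ j', j1 ≤ j' → j' < j2 → B.tile i j' ≠ .jelbow) →
      Relation.ReflTransGen B.toDiagram.Step (i, j1, false) (i, j2, false) := by
  intro j2
  induction j2 with
  | zero =>
    intro j1 h _ _; interval_cases j1; exact Relation.ReflTransGen.refl
  | succ j ih =>
    intro j1 h hlt hnj
    rcases Nat.eq_or_lt_of_le h with h' | h'
    · subst h'; exact Relation.ReflTransGen.refl
    · have hE : (B.tile i j).exitEast false = true := by
        rw [exitEast_false_eq _ (B.nobump _ _)]
        simpa using hnj j (by omega) (by omega)
      have hstep : B.toDiagram.Step (i, j, false) (i, j+1, false) :=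
        ⟨hi, show j < n by omega, by rw [if_pos hE]; exact ⟨hlt, rfl⟩⟩
      exact Relation.ReflTransGen.tail
        (ih j1 (by omega) (by omega) (fun j' h1 h2 => hnj j' h1 (by omega))) hstep

end Walks
end BPDAux
namespace BPDAux
open Tile Classical

section Main
variable {n m : ℕ}

/-- `some b` if `f b = j` for (a necessarily unique) `b`. -/
noncomputable def keptIdx (f : Fin m ↪o Fin n) (j : ℕ) : Option (Fin m) :=
  if h : ∃ b : Fin m, ((f b : Fin n) : ℕ) = j then some h.choose else none

lemma keptIdx_self (f : Fin m ↪o Fin n) (b : Fin m) :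
    keptIdx f ((f b : Fin n) : ℕ) = some b := by
  have h : ∃ b' : Fin m, ((f b' : Fin n) : ℕ) = ((f b : Fin n) : ℕ) := ⟨b, rfl⟩
  rw [keptIdx, dif_pos h]
  congr 1
  have := h.choose_spec
  exact f.injective (Fin.val_injective this)

lemma keptIdx_some {f : Fin m ↪o Fin n} {j : ℕ} {b : Fin m}
    (h : keptIdx f j = some b) : ((f b : Fin n) : ℕ) = j := by
  rw [keptIdx] at h
  split at h
  · obtain rfl : _ = b := Option.some.injEq _ _ ▸ h
    exact ‹∃ b', _›.choose_spec
  · exact absurd h (by simp)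

lemma keptIdx_none {f : Fin m ↪o Fin n} {j : ℕ}
    (h : keptIdx f j = none) : ∀ b : Fin m, ((f b : Fin n) : ℕ) ≠ j := by
  rw [keptIdx] at h
  split at h
  · exact absurd h (by simp)
  · push_neg at *; assumption

/-- The greatest `a` with `f a ≤ i`, if any. -/
noncomputable def kA (f : Fin m ↪o Fin n) (i : ℕ) : Option (Fin m) :=
  if h : ∃ a : Fin m, ((f a : Fin n) : ℕ) ≤ i ∧
      ∀ a' : Fin m, ((f a' : Fin n) : ℕ) ≤ i → a' ≤ a then some h.choose else none

lemma kA_eq_some_iff {f : Fin m ↪o Fin n} {i : ℕ} {a : Fin m} :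
    kA f i = some a ↔ ((f a : Fin n) : ℕ) ≤ i ∧
      ∀ a' : Fin m, ((f a' : Fin n) : ℕ) ≤ i → a' ≤ a := by
  constructor
  · intro h
    rw [kA] at h
    split at h
    · obtain rfl : _ = a := Option.some.injEq _ _ ▸ h
      exact ‹∃ a', _›.choose_spec
    · exact absurd h (by simp)
  · intro h
    have hex : ∃ a : Fin m, ((f a : Fin n) : ℕ) ≤ i ∧
        ∀ a' : Fin m, ((f a' : Fin n) : ℕ) ≤ i → a' ≤ a := ⟨a, h⟩
    rw [kA, dif_pos hex]
    congr 1
    exact le_antisymm (h.2 _ hex.choose_spec.1) (hex.choose_spec.2 _ h.1)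

lemma kA_none {f : Fin m ↪o Fin n} {i : ℕ}
    (h : kA f i = none) : ∀ a : Fin m, ¬ ((f a : Fin n) : ℕ) ≤ i := by
  intro a ha
  obtain ⟨b, hb, hb2⟩ := Finset.exists_max_image
    (Finset.univ.filter fun a : Fin m => ((f a : Fin n) : ℕ) ≤ i) id ⟨a, by simp [ha]⟩
  have : kA f i = some b := kA_eq_some_iff.mpr
    ⟨by simpa using hb, fun a' ha' => by simpa using hb2 a' (by simp [ha'])⟩
  rw [h] at this; exact absurd this (by simp)

lemma kA_self (f : Fin m ↪o Fin n) (a : Fin m) : kA f ((f a : Fin n) : ℕ) = some a := by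
  refine kA_eq_some_iff.mpr ⟨le_rfl, fun a' ha' => ?_⟩
  have : f a' ≤ f a := by rw [Fin.le_def]; exact ha'
  exact f.le_iff_le.mp this

lemma kA_skip {f : Fin m ↪o Fin n} {i : ℕ} (hi : 0 < i)
    (h : ∀ a : Fin m, ((f a : Fin n) : ℕ) ≠ i) : kA f i = kA f (i - 1) := by
  rcases hA : kA f (i-1) with _ | a
  · rcases hA' : kA f i with _ | a'
    · rfl
    · obtain ⟨h1, _⟩ := kA_eq_some_iff.mp hA'
      exact absurd (by have := h a'; omega) (kA_none hA a')
  · obtain ⟨h1, h2⟩ := kA_eq_some_iff.mp hA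
    refine kA_eq_some_iff.mpr ⟨by omega, fun a' ha' => h2 a' (by have := h a'; omega)⟩

lemma kA_zero_of_not_kept {f : Fin m ↪o Fin n}
    (h : ∀ a : Fin m, ((f a : Fin n) : ℕ) ≠ 0) : kA f 0 = none := by
  rcases hA : kA f 0 with _ | a
  · rfl
  · obtain ⟨h1, _⟩ := kA_eq_some_iff.mp hA
    exact absurd h1 (by have := h a; omega)

lemma kA_top {f : Fin m ↪o Fin n} (hm : 0 < m) (hn : 0 < n) :
    kA f (n - 1) = some ⟨m - 1, by omega⟩ := by
  refine kA_eq_some_iff.mpr ⟨by have := (f ⟨m-1, by omega⟩).isLt; omega, fun a' _ => ?_⟩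
  rw [Fin.le_def]
  show (a' : ℕ) ≤ m - 1
  have := a'.isLt
  omega

lemma le_apply (f : Fin m ↪o Fin n) (a : Fin m) : (a : ℕ) ≤ ((f a : Fin n) : ℕ) := by
  obtain ⟨av, ha⟩ := a
  induction av with
  | zero => simp
  | succ k ih =>
    have h1 := ih (by omega)
    have h2 : f ⟨k, by omega⟩ < f ⟨k+1, ha⟩ := f.strictMono (by rw [Fin.lt_def]; simp)
    rw [Fin.lt_def] at h2
    simp only [Fin.val_mk] at h1 ⊢
    omega

variable (w : Equiv.Perm (Fin n)) (s t : Fin m ↪o Fin n) (u : Equiv.Perm (Fin m))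

section Classify
variable (hst : ∀ i : Fin m, w (s i) = t (u i))
include hst

lemma symm_kept (b : Fin m) : w.symm (t b) = s (u.symm b) := by
  apply w.injective
  rw [Equiv.apply_symm_apply, hst, Equiv.apply_symm_apply]

lemma deleted_col_of_deleted_row {k : Fin n} (hk : k ∉ Set.range s) :
    ∀ b : Fin m, t b ≠ w k := by
  intro b hb
  exact hk ⟨u.symm b, by rw [← symm_kept w s t u hst, hb, Equiv.symm_apply_apply]⟩

lemma deleted_row_of_deleted_col {j : Fin n} (hj : ∀ b : Fin m, t b ≠ j) :
    w.symm j ∉ Set.range s := by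
  rintro ⟨a, ha⟩
  exact hj (u a) (by rw [← hst, ha, Equiv.apply_symm_apply])

end Classify

variable (B' : BPD m)

/-- Vertical edges (south edge of each cell) of the insertion of `B'`. -/
noncomputable def EVpsi (i j : ℕ) : Bool :=
  match keptIdx t j with
  | some b =>
    match kA s i with
    | some a => (B'.tile a b).south
    | none => false
  | none =>
    if hj : j < n then decide (((w.symm ⟨j, hj⟩ : Fin n) : ℕ) ≤ i) else false

/-- Horizontal edges (east edge of each cell) of the insertion of `B'`. -/
noncomputable def EHpsi (i j : ℕ) : Bool :=
  match keptIdx s i with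
  | some a =>
    match kA t j with
    | some b => (B'.tile a b).east
    | none => false
  | none =>
    if hi : i < n then decide (((w ⟨i, hi⟩ : Fin n) : ℕ) ≤ j) else false

noncomputable def Npsi (i j : ℕ) : Bool := if i = 0 then false else EVpsi w s t B' (i-1) j

noncomputable def Wpsi (i j : ℕ) : Bool := if j = 0 then false else EHpsi w s t B' i (j-1)

noncomputable def tpsi (i j : ℕ) : Tile :=
  if i < n ∧ j < n then
    mk4 (Npsi w s t B' i j) (EVpsi w s t B' i j) (Wpsi w s t B' i j) (EHpsi w s t B' i j)
  else .blank

end Main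
end BPDAux
namespace BPDAux
open Tile

lemma ne_relbow_of_ns (x : Tile) (h : x.north = x.south) : x ≠ .relbow := by
  cases x <;> simp_all [north, south]

lemma ne_jelbow_of_ns (x : Tile) (h : x.north = x.south) : x ≠ .jelbow := by
  cases x <;> simp_all [north, south]

section Main2
variable {n m : ℕ} (w : Equiv.Perm (Fin n)) (s t : Fin m ↪o Fin n) (u : Equiv.Perm (Fin m))
  (B' : BPD m)

lemma EVpsi_eq_of_kept {j : ℕ} {b : Fin m} (hb : keptIdx t j = some b) (i : ℕ) :
    EVpsi w s t B' i j =
      (match kA s i with | some a => (B'.tile a b).south | none => false) := by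
  simp only [EVpsi, hb]

lemma EVpsi_eq_of_del {j : ℕ} (hj : j < n) (hd : keptIdx t j = none) (i : ℕ) :
    EVpsi w s t B' i j = decide (((w.symm ⟨j, hj⟩ : Fin n) : ℕ) ≤ i) := by
  simp only [EVpsi, hd, dif_pos hj]

lemma EHpsi_eq_of_kept {i : ℕ} {a : Fin m} (ha : keptIdx s i = some a) (j : ℕ) :
    EHpsi w s t B' i j =
      (match kA t j with | some b => (B'.tile a b).east | none => false) := by
  simp only [EHpsi, ha]

lemma EHpsi_eq_of_del {i : ℕ} (hi : i < n) (hd : keptIdx s i = none) (j : ℕ) :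
    EHpsi w s t B' i j = decide (((w ⟨i, hi⟩ : Fin n) : ℕ) ≤ j) := by
  simp only [EHpsi, hd, dif_pos hi]

/-- At a cell which is not kept-kept and not an inserted elbow, opposite edges
of the inserted diagram agree. -/
lemma psi_ns_we (hst : ∀ i : Fin m, w (s i) = t (u i)) {i j : ℕ} (hi : i < n) (hj : j < n)
    (hnot : keptIdx s i = none ∨ keptIdx t j = none)
    (hins : keptIdx s i = none → ((w ⟨i, hi⟩ : Fin n) : ℕ) ≠ j) :
    Npsi w s t B' i j = EVpsi w s t B' i j ∧
      Wpsi w s t B' i j = EHpsi w s t B' i j := by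
  rcases hrow : keptIdx s i with _ | a
  · -- row deleted
    have hwne : ((w ⟨i, hi⟩ : Fin n) : ℕ) ≠ j := hins hrow
    constructor
    · -- vertical edges
      rcases hcol : keptIdx t j with _ | b
      · -- column deleted
        have hk'ne : ((w.symm ⟨j, hj⟩ : Fin n) : ℕ) ≠ i := by
          intro he
          apply hwne
          have : (⟨i, hi⟩ : Fin n) = w.symm ⟨j, hj⟩ := by
            apply Fin.val_injective; exact he.symm
          rw [this, Equiv.apply_symm_apply]
        rw [Npsi]
        split
        · rename_i h0
          subst h0
          rw [EVpsi_eq_of_del w s t B' hj hcol]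
          symm
          simp only [decide_eq_false_iff_not]
          omega
        · rw [EVpsi_eq_of_del w s t B' hj hcol, EVpsi_eq_of_del w s t B' hj hcol]
          simp only [decide_eq_decide]
          omega
      · -- column kept
        have hker := keptIdx_none hrow
        rw [Npsi]
        split
        · rename_i h0
          subst h0
          rw [EVpsi_eq_of_kept w s t B' hcol, kA_zero_of_not_kept (f := s) hker]
        · rw [EVpsi_eq_of_kept w s t B' hcol, EVpsi_eq_of_kept w s t B' hcol,
            kA_skip (by omega) hker]
    · -- horizontal edges
      rw [Wpsi]
      split
      · rename_i h0
        subst h0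
        rw [EHpsi_eq_of_del w s t B' hi hrow]
        symm
        simp only [decide_eq_false_iff_not]
        omega
      · rw [EHpsi_eq_of_del w s t B' hi hrow, EHpsi_eq_of_del w s t B' hi hrow]
        simp only [decide_eq_decide]
        omega
  · -- row kept
    have hia : ((s a : Fin n) : ℕ) = i := keptIdx_some hrow
    have hcol : keptIdx t j = none := by
      rcases hnot with h | h
      · rw [hrow] at h; exact absurd h (by simp)
      · exact h
    have hker := keptIdx_none hcol
    have hk'ne : ((w.symm ⟨j, hj⟩ : Fin n) : ℕ) ≠ i := by
      intro he
      have h1 : (⟨i, hi⟩ : Fin n) = w.symm ⟨j, hj⟩ := by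
        apply Fin.val_injective; exact he.symm
      have h2 : w ⟨i, hi⟩ = ⟨j, hj⟩ := by rw [h1, Equiv.apply_symm_apply]
      have h3 : (⟨i, hi⟩ : Fin n) = s a := by apply Fin.val_injective; exact hia.symm
      rw [h3, hst] at h2
      exact hker (u a) (by rw [h2])
    constructor
    · rw [Npsi]
      split
      · rename_i h0
        subst h0
        rw [EVpsi_eq_of_del w s t B' hj hcol]
        symm
        simp only [decide_eq_false_iff_not]
        omega
      · rw [EVpsi_eq_of_del w s t B' hj hcol, EVpsi_eq_of_del w s t B' hj hcol]
        simp only [decide_eq_decide]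
        omega
    · rw [Wpsi]
      split
      · rename_i h0
        subst h0
        rw [EHpsi_eq_of_kept w s t B' hrow, kA_zero_of_not_kept (f := t) hker]
      · rw [EHpsi_eq_of_kept w s t B' hrow, EHpsi_eq_of_kept w s t B' hrow,
          kA_skip (by omega) hker]

/-- The inserted elbow cell has exactly the r-elbow edges. -/
lemma psi_insert (hst : ∀ i : Fin m, w (s i) = t (u i)) {i j : ℕ} (hi : i < n) (hj : j < n) (hrow : keptIdx s i = none)
    (hw : ((w ⟨i, hi⟩ : Fin n) : ℕ) = j) :
    Npsi w s t B' i j = false ∧ EVpsi w s t B' i j = true ∧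
      Wpsi w s t B' i j = false ∧ EHpsi w s t B' i j = true := by
  have hkrow : (⟨i, hi⟩ : Fin n) ∉ Set.range (s : Fin m → Fin n) := by
    rintro ⟨a, ha⟩
    exact keptIdx_none hrow a (by rw [ha])
  have hcol : keptIdx t j = none := by
    rcases hc : keptIdx t j with _ | b
    · rfl
    · exfalso
      have := keptIdx_some hc
      have hb : t b = w ⟨i, hi⟩ := by
        apply Fin.val_injective; rw [this, hw]
      exact deleted_col_of_deleted_row w s t u hst hkrow b hb
  have hk' : ((w.symm ⟨j, hj⟩ : Fin n) : ℕ) = i := by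
    have : (⟨j, hj⟩ : Fin n) = w ⟨i, hi⟩ := by apply Fin.val_injective; exact hw.symm
    rw [this, Equiv.symm_apply_apply]
  refine ⟨?_, ?_, ?_, ?_⟩
  · rw [Npsi]
    split
    · rfl
    · rw [EVpsi_eq_of_del w s t B' hj hcol]
      simp only [decide_eq_false_iff_not]
      omega
  · rw [EVpsi_eq_of_del w s t B' hj hcol]
    simp only [decide_eq_true_eq]
    omega
  · rw [Wpsi]
    split
    · rfl
    · rw [EHpsi_eq_of_del w s t B' hi hrow]
      simp only [decide_eq_false_iff_not]
      omega
  · rw [EHpsi_eq_of_del w s t B' hi hrow]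
    simp only [decide_eq_true_eq]
    omega

/-- At a kept-kept cell, the inserted edges are the edges of the tile of `B'`. -/
lemma psi_kept_edges (a b : Fin m) :
    Npsi w s t B' (s a) (t b) = (B'.tile a b).north ∧
    EVpsi w s t B' (s a) (t b) = (B'.tile a b).south ∧
    Wpsi w s t B' (s a) (t b) = (B'.tile a b).west ∧
    EHpsi w s t B' (s a) (t b) = (B'.tile a b).east := by
  refine ⟨?_, ?_, ?_, ?_⟩
  · rw [Npsi]
    split
    · -- s a = 0, so a = 0
      have ha0 : (a : ℕ) = 0 := by have := le_apply s a; omega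
      rw [ha0]
      exact (B'.top (b : ℕ) b.isLt).symm
    · rw [EVpsi_eq_of_kept w s t B' (keptIdx_self t b)]
      by_cases ha0 : (a : ℕ) = 0
      · have hnone : kA s ((s a : ℕ) - 1) = none := by
          rcases hk : kA s ((s a : ℕ) - 1) with _ | a''
          · rfl
          · exfalso
            obtain ⟨h1, _⟩ := kA_eq_some_iff.mp hk
            have : a ≤ a'' := by rw [Fin.le_def]; omega
            have : s a ≤ s a'' := s.monotone this
            rw [Fin.le_def] at this
            omega
        rw [hnone]
        have : (B'.tile (a : ℕ) (b : ℕ)).north = false := by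
          rw [ha0]; exact B'.top (b : ℕ) b.isLt
        rw [this]
      · have ha' : kA s ((s a : ℕ) - 1) = some ⟨(a : ℕ) - 1, by have := a.isLt; omega⟩ := by
          refine kA_eq_some_iff.mpr ⟨?_, ?_⟩
          · have : s ⟨(a : ℕ) - 1, by have := a.isLt; omega⟩ < s a :=
              s.strictMono (by rw [Fin.lt_def]; show (a:ℕ) - 1 < (a:ℕ); omega)
            rw [Fin.lt_def] at this
            have h0 : 0 < (s a : ℕ) := by omega
            omega
          · intro x hx
            have hxa : s x < s a := by rw [Fin.lt_def]; omega
            have : x < a := s.lt_iff_lt.mp hxa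
            rw [Fin.lt_def] at this
            rw [Fin.le_def]
            show (x:ℕ) ≤ (a:ℕ) - 1
            omega
        rw [ha']
        have hv := B'.vmatch ((a : ℕ) - 1) (b : ℕ) (by have := a.isLt; omega) b.isLt
        have he : (a : ℕ) - 1 + 1 = (a : ℕ) := by omega
        rw [he] at hv
        exact hv
  · rw [EVpsi_eq_of_kept w s t B' (keptIdx_self t b), kA_self]
  · rw [Wpsi]
    split
    · have hb0 : (b : ℕ) = 0 := by have := le_apply t b; omega
      rw [hb0]
      exact (B'.left (a : ℕ) a.isLt).symm
    · rw [EHpsi_eq_of_kept w s t B' (keptIdx_self s a)]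
      by_cases hb0 : (b : ℕ) = 0
      · have hnone : kA t ((t b : ℕ) - 1) = none := by
          rcases hk : kA t ((t b : ℕ) - 1) with _ | b''
          · rfl
          · exfalso
            obtain ⟨h1, _⟩ := kA_eq_some_iff.mp hk
            have : b ≤ b'' := by rw [Fin.le_def]; omega
            have : t b ≤ t b'' := t.monotone this
            rw [Fin.le_def] at this
            omega
        rw [hnone]
        have : (B'.tile (a : ℕ) (b : ℕ)).west = false := by
          rw [hb0]; exact B'.left (a : ℕ) a.isLt
        rw [this]
      · have hb' : kA t ((t b : ℕ) - 1) = some ⟨(b : ℕ) - 1, by have := b.isLt; omega⟩ := by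
          refine kA_eq_some_iff.mpr ⟨?_, ?_⟩
          · have : t ⟨(b : ℕ) - 1, by have := b.isLt; omega⟩ < t b :=
              t.strictMono (by rw [Fin.lt_def]; show (b:ℕ) - 1 < (b:ℕ); omega)
            rw [Fin.lt_def] at this
            have h0 : 0 < (t b : ℕ) := by omega
            omega
          · intro x hx
            have hxb : t x < t b := by rw [Fin.lt_def]; omega
            have : x < b := t.lt_iff_lt.mp hxb
            rw [Fin.lt_def] at this
            rw [Fin.le_def]
            show (x:ℕ) ≤ (b:ℕ) - 1
            omega
        rw [hb']
        have hv := B'.hmatch (a : ℕ) ((b : ℕ) - 1) a.isLt (by have := b.isLt; omega)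
        have he : (b : ℕ) - 1 + 1 = (b : ℕ) := by omega
        rw [he] at hv
        exact hv
  · rw [EHpsi_eq_of_kept w s t B' (keptIdx_self s a), kA_self]

lemma tpsi_valid (hst : ∀ i : Fin m, w (s i) = t (u i)) {i j : ℕ} (hi : i < n) (hj : j < n) :
    Valid (Npsi w s t B' i j) (EVpsi w s t B' i j)
      (Wpsi w s t B' i j) (EHpsi w s t B' i j) := by
  rcases hrow : keptIdx s i with _ | a
  · by_cases hw : ((w ⟨i, hi⟩ : Fin n) : ℕ) = j
    · obtain ⟨h1, h2, h3, h4⟩ := psi_insert w s t u B' hst hi hj hrow hw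
      rw [h1, h2, h3, h4]
      right; left; exact ⟨rfl, rfl, rfl, rfl⟩
    · obtain ⟨h1, h2⟩ := psi_ns_we w s t u B' hst hi hj (Or.inl hrow) (fun _ => hw)
      exact Or.inl ⟨h1, h2⟩
  · rcases hcol : keptIdx t j with _ | b
    · obtain ⟨h1, h2⟩ := psi_ns_we w s t u B' hst hi hj (Or.inr hcol)
        (fun hd => by rw [hd] at hrow; exact absurd hrow (by simp))
      exact Or.inl ⟨h1, h2⟩
    · have hia : ((s a : Fin n) : ℕ) = i := keptIdx_some hrow
      have hjb : ((t b : Fin n) : ℕ) = j := keptIdx_some hcol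
      subst hia; subst hjb
      obtain ⟨h1, h2, h3, h4⟩ := psi_kept_edges w s t B' a b
      rw [h1, h2, h3, h4]
      exact valid_tile _ (B'.nobump _ _)

/-- The insertion of `B'` along `w, s, t`. -/
noncomputable def Psi (hst : ∀ i : Fin m, w (s i) = t (u i)) : BPD n where
  tile := tpsi w s t B'
  vmatch := by
    intro i j h1 h2
    rw [tpsi, if_pos ⟨by omega, h2⟩, tpsi, if_pos ⟨h1, h2⟩,
      mk4_south (tpsi_valid w s t u B' hst (by omega) h2),
      mk4_north (tpsi_valid w s t u B' hst h1 h2)]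
    rw [Npsi]
    simp
  hmatch := by
    intro i j h1 h2
    rw [tpsi, if_pos ⟨h1, by omega⟩, tpsi, if_pos ⟨h1, h2⟩,
      mk4_east (tpsi_valid w s t u B' hst h1 (by omega)),
      mk4_west (tpsi_valid w s t u B' hst h1 h2)]
    rw [Wpsi]
    simp
  bottom := by
    intro j hj
    rw [tpsi, if_pos ⟨by omega, hj⟩,
      mk4_south (tpsi_valid w s t u B' hst (by omega) hj)]
    rcases hcol : keptIdx t j with _ | b
    · rw [EVpsi_eq_of_del w s t B' hj hcol]
      simp only [decide_eq_true_eq]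
      have := ((w.symm ⟨j, hj⟩ : Fin n)).isLt
      omega
    · rw [EVpsi_eq_of_kept w s t B' hcol,
        kA_top (by have := b.isLt; omega) (by omega)]
      exact B'.bottom (b : ℕ) b.isLt
  right := by
    intro i hi
    rw [tpsi, if_pos ⟨hi, by omega⟩,
      mk4_east (tpsi_valid w s t u B' hst hi (by omega))]
    rcases hrow : keptIdx s i with _ | a
    · rw [EHpsi_eq_of_del w s t B' hi hrow]
      simp only [decide_eq_true_eq]
      have := ((w ⟨i, hi⟩ : Fin n)).isLt
      omega
    · rw [EHpsi_eq_of_kept w s t B' hrow,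
        kA_top (by have := a.isLt; omega) (by omega)]
      exact B'.right (a : ℕ) a.isLt
  top := by
    intro j hj
    rw [tpsi, if_pos ⟨by omega, hj⟩,
      mk4_north (tpsi_valid w s t u B' hst (by omega) hj)]
    rw [Npsi]
    simp
  left := by
    intro i hi
    rw [tpsi, if_pos ⟨hi, by omega⟩,
      mk4_west (tpsi_valid w s t u B' hst hi (by omega))]
    rw [Wpsi]
    simp
  outside := by
    intro i j h
    rw [tpsi, if_neg (by tauto)]
  nobump := by
    intro i j hbump
    have hbump' : tpsi w s t B' i j = Tile.bump := hbump
    rw [tpsi] at hbump'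
    split at hbump'
    · exact mk4_ne_bump _ _ _ _ hbump'
    · simp at hbump'

lemma psi_south (hst : ∀ i : Fin m, w (s i) = t (u i)) {i j : ℕ} (hi : i < n) (hj : j < n) :
    ((Psi w s t u B' hst).tile i j).south = EVpsi w s t B' i j := by
  show (tpsi w s t B' i j).south = _
  rw [tpsi, if_pos ⟨hi, hj⟩, mk4_south (tpsi_valid w s t u B' hst hi hj)]

lemma psi_north (hst : ∀ i : Fin m, w (s i) = t (u i)) {i j : ℕ} (hi : i < n) (hj : j < n) :
    ((Psi w s t u B' hst).tile i j).north = Npsi w s t B' i j := by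
  show (tpsi w s t B' i j).north = _
  rw [tpsi, if_pos ⟨hi, hj⟩, mk4_north (tpsi_valid w s t u B' hst hi hj)]

lemma psi_east (hst : ∀ i : Fin m, w (s i) = t (u i)) {i j : ℕ} (hi : i < n) (hj : j < n) :
    ((Psi w s t u B' hst).tile i j).east = EHpsi w s t B' i j := by
  show (tpsi w s t B' i j).east = _
  rw [tpsi, if_pos ⟨hi, hj⟩, mk4_east (tpsi_valid w s t u B' hst hi hj)]

lemma psi_west (hst : ∀ i : Fin m, w (s i) = t (u i)) {i j : ℕ} (hi : i < n) (hj : j < n) :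
    ((Psi w s t u B' hst).tile i j).west = Wpsi w s t B' i j := by
  show (tpsi w s t B' i j).west = _
  rw [tpsi, if_pos ⟨hi, hj⟩, mk4_west (tpsi_valid w s t u B' hst hi hj)]

/-- On kept rows and columns, the insertion restricts to `B'`. -/
lemma psi_tile_kept (hst : ∀ i : Fin m, w (s i) = t (u i)) (a b : Fin m) :
    (Psi w s t u B' hst).tile (s a) (t b) = B'.tile a b := by
  show tpsi w s t B' (s a) (t b) = _
  rw [tpsi, if_pos ⟨(s a).isLt, (t b).isLt⟩]
  obtain ⟨h1, h2, h3, h4⟩ := psi_kept_edges w s t B' a b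
  rw [h1, h2, h3, h4]
  exact mk4_tile _ (B'.nobump _ _)

/-- Cells that are not kept-kept and not the inserted elbow are not elbows. -/
lemma psi_no_elbow (hst : ∀ i : Fin m, w (s i) = t (u i)) {i j : ℕ} (hi : i < n) (hj : j < n)
    (hnot : keptIdx s i = none ∨ keptIdx t j = none)
    (hins : keptIdx s i = none → ((w ⟨i, hi⟩ : Fin n) : ℕ) ≠ j) :
    (Psi w s t u B' hst).tile i j ≠ .relbow ∧
      (Psi w s t u B' hst).tile i j ≠ .jelbow := by
  obtain ⟨h1, _⟩ := psi_ns_we w s t u B' hst hi hj hnot hins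
  have hns : ((Psi w s t u B' hst).tile i j).north = ((Psi w s t u B' hst).tile i j).south := by
    rw [psi_north w s t u B' hst hi hj, psi_south w s t u B' hst hi hj, h1]
  exact ⟨ne_relbow_of_ns _ hns, ne_jelbow_of_ns _ hns⟩

/-- The inserted elbow. -/
lemma psi_tile_insert (hst : ∀ i : Fin m, w (s i) = t (u i)) {i j : ℕ} (hi : i < n) (hj : j < n) (hrow : keptIdx s i = none)
    (hw : ((w ⟨i, hi⟩ : Fin n) : ℕ) = j) :
    (Psi w s t u B' hst).tile i j = .relbow := by
  show tpsi w s t B' i j = _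
  rw [tpsi, if_pos ⟨hi, hj⟩]
  obtain ⟨h1, h2, h3, h4⟩ := psi_insert w s t u B' hst hi hj hrow hw
  rw [h1, h2, h3, h4]
  rfl

end Main2
end BPDAux
namespace BPDAux
open Tile

section Lift
variable {n m : ℕ} (w : Equiv.Perm (Fin n)) (s t : Fin m ↪o Fin n) (u : Equiv.Perm (Fin m))
  (B' : BPD m) (hst : ∀ i : Fin m, w (s i) = t (u i))

lemma not_range_of_keptIdx_none {i : ℕ} (hi : i < n) (hrow : keptIdx s i = none) :
    (⟨i, hi⟩ : Fin n) ∉ Set.range (s : Fin m → Fin n) := by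
  rintro ⟨a, ha⟩
  exact keptIdx_none hrow a (by rw [ha])

lemma keptIdx_eq_none {f : Fin m ↪o Fin n} {i : ℕ}
    (h : ∀ a : Fin m, ((f a : Fin n) : ℕ) ≠ i) : keptIdx f i = none := by
  rcases hk : keptIdx f i with _ | a
  · rfl
  · exact absurd (keptIdx_some hk) (h a)

lemma w_del_ne_kept (u : Equiv.Perm (Fin m))
    (hst : ∀ i : Fin m, w (s i) = t (u i)) {i : ℕ}
    (hi : i < n) (hrow : keptIdx s i = none) (b : Fin m) :
    ((w ⟨i, hi⟩ : Fin n) : ℕ) ≠ ((t b : Fin n) : ℕ) := by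
  intro h
  exact deleted_col_of_deleted_row w s t u hst
    (not_range_of_keptIdx_none s hi hrow) b (Fin.val_injective h).symm

/-- Gap rows between consecutive kept rows are deleted. -/
lemma gap_deleted {f : Fin m ↪o Fin n} {a : Fin m} {i' : ℕ}
    (h1 : ∀ a' : Fin m, a' < a → ((f a' : Fin n) : ℕ) < i' ∨ ¬ a' < a)
    (h2 : i' < ((f a : Fin n) : ℕ))
    (h3 : ∀ a' : Fin m, a' < a → ((f a' : Fin n) : ℕ) ≠ i') : True := trivial

lemma lift_step {a b : Fin m} {d : Bool} {ρ : ℕ × ℕ × Bool}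
    (h : B'.toDiagram.Step ((a : ℕ), (b : ℕ), d) ρ) :
    ∃ (h1 : ρ.1 < m) (h2 : ρ.2.1 < m),
      Relation.ReflTransGen (Psi w s t u B' hst).toDiagram.Step
        (((s a : Fin n) : ℕ), ((t b : Fin n) : ℕ), d)
        (((s ⟨ρ.1, h1⟩ : Fin n) : ℕ), ((t ⟨ρ.2.1, h2⟩ : Fin n) : ℕ), ρ.2.2) := by
  obtain ⟨ha, hb, hif⟩ := h
  dsimp only at ha hb hif
  have htile : (Psi w s t u B' hst).tile ((s a : Fin n) : ℕ) ((t b : Fin n) : ℕ)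
      = B'.tile (a : ℕ) (b : ℕ) := psi_tile_kept w s t u B' hst a b
  by_cases hE : (B'.tile (a : ℕ) (b : ℕ)).exitEast d = true
  · rw [if_pos hE] at hif
    obtain ⟨hb1, rfl⟩ := hif
    dsimp only at hb1 ⊢
    refine ⟨ha, hb1, ?_⟩
    have hlt : ((t b : Fin n) : ℕ) < ((t ⟨(b : ℕ) + 1, hb1⟩ : Fin n) : ℕ) := by
      have := t.strictMono (show b < ⟨(b : ℕ) + 1, hb1⟩ by rw [Fin.lt_def]; simp)
      rwa [Fin.lt_def] at this
    have hstep1 : (Psi w s t u B' hst).toDiagram.Step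
        (((s a : Fin n) : ℕ), ((t b : Fin n) : ℕ), d)
        (((s a : Fin n) : ℕ), ((t b : Fin n) : ℕ) + 1, false) := by
      refine ⟨(s a).isLt, (t b).isLt, ?_⟩
      rw [htile, if_pos hE]
      exact ⟨show ((t b : Fin n) : ℕ) + 1 < n from
        by have := (t ⟨(b : ℕ) + 1, hb1⟩).isLt; omega, rfl⟩
    refine Relation.ReflTransGen.head hstep1 ?_
    refine crawl _ _ (s a).isLt _ _ (by omega) (t ⟨(b : ℕ) + 1, hb1⟩).isLt ?_
    intro j' hj1 hj2
    have hj' : j' < n := by have := (t ⟨(b : ℕ) + 1, hb1⟩).isLt; omega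
    have hcol : keptIdx t j' = none := by
      refine keptIdx_eq_none fun b'' hb'' => ?_
      have hgt : t b < t b'' := by rw [Fin.lt_def]; omega
      have hlt2 : t b'' < t ⟨(b : ℕ) + 1, hb1⟩ := by rw [Fin.lt_def]; omega
      have h1 : b < b'' := t.lt_iff_lt.mp hgt
      have h2 : b'' < ⟨(b : ℕ) + 1, hb1⟩ := t.lt_iff_lt.mp hlt2
      rw [Fin.lt_def] at h1 h2
      have h1' : (b : ℕ) < (b'' : ℕ) := h1
      have h2' : (b'' : ℕ) < (b : ℕ) + 1 := h2
      omega
    exact (psi_no_elbow w s t u B' hst (s a).isLt hj' (Or.inr hcol)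
      (fun hd => absurd (keptIdx_self s a) (by rw [hd]; simp))).2
  · rw [if_neg hE] at hif
    obtain ⟨ha1, rfl⟩ := hif
    dsimp only at ha1 ⊢
    have ha0 : 0 < (a : ℕ) := ha1
    refine ⟨by omega, b.isLt, ?_⟩
    have hsa0 : 0 < ((s a : Fin n) : ℕ) := by have := le_apply s a; omega
    have hstep1 : (Psi w s t u B' hst).toDiagram.Step
        (((s a : Fin n) : ℕ), ((t b : Fin n) : ℕ), d)
        (((s a : Fin n) : ℕ) - 1, ((t b : Fin n) : ℕ), true) := by
      refine ⟨(s a).isLt, (t b).isLt, ?_⟩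
      rw [htile, if_neg hE]
      exact ⟨hsa0, rfl⟩
    refine Relation.ReflTransGen.head hstep1 ?_
    rw [Fin.eta]
    have hlt : ((s ⟨(a : ℕ) - 1, by omega⟩ : Fin n) : ℕ) < ((s a : Fin n) : ℕ) := by
      have := s.strictMono (show (⟨(a : ℕ) - 1, by omega⟩ : Fin m) < a by
        rw [Fin.lt_def]; show (a : ℕ) - 1 < (a : ℕ); omega)
      rwa [Fin.lt_def] at this
    refine climb _ _ (t b).isLt _ _ (by omega) (by omega) ?_
    intro i' hi1 hi2
    have hi' : i' < n := by have := (s a).isLt; omega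
    have hrow : keptIdx s i' = none := by
      refine keptIdx_eq_none fun a'' ha'' => ?_
      have hgt : s ⟨(a : ℕ) - 1, by omega⟩ < s a'' := by rw [Fin.lt_def]; omega
      have hlt2 : s a'' < s a := by rw [Fin.lt_def]; omega
      have h1 := s.lt_iff_lt.mp hgt
      have h2 := s.lt_iff_lt.mp hlt2
      rw [Fin.lt_def] at h1 h2
      have h1' : (a : ℕ) - 1 < (a'' : ℕ) := h1
      have h2' : (a'' : ℕ) < (a : ℕ) := h2
      omega
    exact (psi_no_elbow w s t u B' hst hi' (t b).isLt (Or.inl hrow)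
      (fun _ => w_del_ne_kept w s t u hst hi' hrow b)).1

lemma lift_walk {a b : Fin m} {d : Bool} {τ : ℕ × ℕ × Bool}
    (h : Relation.ReflTransGen B'.toDiagram.Step ((a : ℕ), (b : ℕ), d) τ) :
    ∃ (h1 : τ.1 < m) (h2 : τ.2.1 < m),
      Relation.ReflTransGen (Psi w s t u B' hst).toDiagram.Step
        (((s a : Fin n) : ℕ), ((t b : Fin n) : ℕ), d)
        (((s ⟨τ.1, h1⟩ : Fin n) : ℕ), ((t ⟨τ.2.1, h2⟩ : Fin n) : ℕ), τ.2.2) := by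
  induction h with
  | refl =>
    refine ⟨a.isLt, b.isLt, ?_⟩
    rw [Fin.eta, Fin.eta]
  | tail hw hstep ih =>
    obtain ⟨h1, h2, hwalk⟩ := ih
    rename_i τ' ρ
    have hstep' : B'.toDiagram.Step
        (((⟨τ'.1, h1⟩ : Fin m) : ℕ), ((⟨τ'.2.1, h2⟩ : Fin m) : ℕ), τ'.2.2) ρ := hstep
    obtain ⟨g1, g2, hwalk2⟩ := lift_step w s t u B' hst hstep'
    exact ⟨g1, g2, hwalk.trans hwalk2⟩

/-- The exit of a pipe of `B'` lifts to the insertion. -/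
lemma lift_exitsAt {b a : Fin m} (h : B'.toDiagram.ExitsAt (b : ℕ) (a : ℕ)) :
    (Psi w s t u B' hst).toDiagram.ExitsAt ((t b : Fin n) : ℕ) ((s a : Fin n) : ℕ) := by
  obtain ⟨d, hr, he⟩ := h
  have hm : 0 < m := by have := b.isLt; omega
  have hn : 0 < n := by have := (s a).isLt; omega
  set amax : Fin m := ⟨m - 1, by omega⟩ with hamax
  -- climb from the bottom of column t b to the lowest kept row
  have hclimb : Relation.ReflTransGen (Psi w s t u B' hst).toDiagram.Step
      (n - 1, ((t b : Fin n) : ℕ), true) (((s amax : Fin n) : ℕ), ((t b : Fin n) : ℕ), true) := by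
    refine climb _ _ (t b).isLt _ _ (by have := (s amax).isLt; omega) (by omega) ?_
    intro i' hi1 hi2
    have hi' : i' < n := by omega
    have hrow : keptIdx s i' = none := by
      refine keptIdx_eq_none fun a'' ha'' => ?_
      have : s a'' ≤ s amax := s.monotone (by
        rw [Fin.le_def, hamax]
        show (a'' : ℕ) ≤ m - 1
        have := a''.isLt; omega)
      rw [Fin.le_def] at this
      omega
    exact (psi_no_elbow w s t u B' hst hi' (t b).isLt (Or.inl hrow)
      (fun _ => w_del_ne_kept w s t u hst hi' hrow b)).1
  -- lift the walk of B'
  have hr' : Relation.ReflTransGen B'.toDiagram.Step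
      ((amax : ℕ), (b : ℕ), true) ((a : ℕ), m - 1, d) := hr
  obtain ⟨h1, h2, hwalk⟩ := lift_walk w s t u B' hst hr'
  rw [show (⟨((a:ℕ), m-1, d).1, h1⟩ : Fin m) = a from Fin.eta a h1] at hwalk
  have hbm : (⟨((a:ℕ), m-1, d).2.1, h2⟩ : Fin m) = amax := rfl
  rw [hbm] at hwalk
  have hexit : ((Psi w s t u B' hst).tile ((s a : Fin n) : ℕ)
      ((t amax : Fin n) : ℕ)).exitEast d = true := by
    rw [psi_tile_kept w s t u B' hst a amax]
    exact he
  by_cases hcase : ((t amax : Fin n) : ℕ) = n - 1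
  · have hw2 := hclimb.trans hwalk
    rw [hcase] at hw2 hexit
    exact ⟨d, hw2, hexit⟩
  · have htmax : ((t amax : Fin n) : ℕ) < n - 1 := by have := (t amax).isLt; omega
    have hstep1 : (Psi w s t u B' hst).toDiagram.Step
        (((s a : Fin n) : ℕ), ((t amax : Fin n) : ℕ), d)
        (((s a : Fin n) : ℕ), ((t amax : Fin n) : ℕ) + 1, false) :=
      ⟨(s a).isLt, (t amax).isLt, by
        rw [hexit, if_pos rfl]
        exact ⟨show ((t amax : Fin n) : ℕ) + 1 < n by omega, rfl⟩⟩
    have hdel : ∀ j', ((t amax : Fin n) : ℕ) + 1 ≤ j' → j' < n → keptIdx t j' = none := by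
      intro j' hj1 hj2
      refine keptIdx_eq_none fun b'' hb'' => ?_
      have : t b'' ≤ t amax := t.monotone (by
        rw [Fin.le_def, hamax]
        show (b'' : ℕ) ≤ m - 1
        have := b''.isLt; omega)
      rw [Fin.le_def] at this
      omega
    have hcrawl : Relation.ReflTransGen (Psi w s t u B' hst).toDiagram.Step
        (((s a : Fin n) : ℕ), ((t amax : Fin n) : ℕ) + 1, false)
        (((s a : Fin n) : ℕ), n - 1, false) := by
      refine crawl _ _ (s a).isLt _ _ (by omega) (by omega) ?_
      intro j' hj1 hj2
      exact (psi_no_elbow w s t u B' hst (s a).isLt (by omega)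
        (Or.inr (hdel j' hj1 (by omega)))
        (fun hd => absurd (keptIdx_self s a) (by rw [hd]; simp))).2
    refine ⟨false, (hclimb.trans hwalk).trans
      (Relation.ReflTransGen.head hstep1 hcrawl), ?_⟩
    have hne := (psi_no_elbow w s t u B' hst (s a).isLt (by omega)
      (Or.inr (hdel (n-1) (by omega) (by omega)))
      (fun hd => absurd (keptIdx_self s a) (by rw [hd]; simp))).2
    rw [exitEast_false_eq _ ((Psi w s t u B' hst).nobump _ _)]
    simpa using hne

/-- The inserted pipes exit where they should. -/
lemma psi_deleted_exit {k : Fin n} (hk : keptIdx s (k : ℕ) = none) :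
    (Psi w s t u B' hst).toDiagram.ExitsAt ((w k : Fin n) : ℕ) (k : ℕ) := by
  have hn : 0 < n := by have := k.isLt; omega
  have hcolwk : keptIdx t ((w k : Fin n) : ℕ) = none := by
    refine keptIdx_eq_none fun b'' hb'' => ?_
    exact deleted_col_of_deleted_row w s t u hst
      (not_range_of_keptIdx_none s k.isLt hk) b'' (Fin.val_injective hb'')
  have hrelbow : (Psi w s t u B' hst).tile (k : ℕ) ((w k : Fin n) : ℕ) = .relbow := by
    refine psi_tile_insert w s t u B' hst k.isLt (w k).isLt hk ?_
    rw [Fin.eta]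
  have hclimb : Relation.ReflTransGen (Psi w s t u B' hst).toDiagram.Step
      (n - 1, ((w k : Fin n) : ℕ), true) ((k : ℕ), ((w k : Fin n) : ℕ), true) := by
    refine climb _ _ (w k).isLt _ _ (by have := k.isLt; omega) (by omega) ?_
    intro i' hi1 hi2
    have hi' : i' < n := by omega
    rcases hrow : keptIdx s i' with _ | a'
    · refine (psi_no_elbow w s t u B' hst hi' (w k).isLt (Or.inl hrow) fun _ hww => ?_).1
      have : (⟨i', hi'⟩ : Fin n) = k := w.injective (Fin.val_injective hww)
      have := congrArg Fin.val this
      simp at this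
      omega
    · exact (psi_no_elbow w s t u B' hst hi' (w k).isLt (Or.inr hcolwk)
        (fun hd => by rw [hrow] at hd; exact absurd hd (by simp))).1
  have hexit1 : ((Psi w s t u B' hst).tile (k : ℕ) ((w k : Fin n) : ℕ)).exitEast true = true := by
    rw [hrelbow]; rfl
  by_cases hcase : ((w k : Fin n) : ℕ) = n - 1
  · have h2 : ((k : ℕ), ((w k : Fin n) : ℕ), true) = ((k : ℕ), n - 1, true) := by rw [hcase]
    rw [hcase] at hexit1
    exact ⟨true, h2 ▸ hclimb, hexit1⟩
  · have hwk : ((w k : Fin n) : ℕ) < n - 1 := by have := (w k).isLt; omega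
    have hstep1 : (Psi w s t u B' hst).toDiagram.Step
        ((k : ℕ), ((w k : Fin n) : ℕ), true)
        ((k : ℕ), ((w k : Fin n) : ℕ) + 1, false) :=
      ⟨k.isLt, (w k).isLt, by
        rw [hexit1, if_pos rfl]
        exact ⟨show ((w k : Fin n) : ℕ) + 1 < n by omega, rfl⟩⟩
    have hne : ∀ j', ((w k : Fin n) : ℕ) < j' → j' < n →
        (Psi w s t u B' hst).tile (k : ℕ) j' ≠ .jelbow := by
      intro j' hj1 hj2
      refine (psi_no_elbow w s t u B' hst k.isLt hj2 (Or.inl hk) fun _ => ?_).2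
      rw [Fin.eta]
      omega
    have hcrawl : Relation.ReflTransGen (Psi w s t u B' hst).toDiagram.Step
        ((k : ℕ), ((w k : Fin n) : ℕ) + 1, false) ((k : ℕ), n - 1, false) := by
      refine crawl _ _ k.isLt _ _ (by omega) (by omega) ?_
      intro j' hj1 hj2
      exact hne j' (by omega) (by omega)
    refine ⟨false, hclimb.trans (Relation.ReflTransGen.head hstep1 hcrawl), ?_⟩
    rw [exitEast_false_eq _ ((Psi w s t u B' hst).nobump _ _)]
    simpa using hne (n - 1) (by omega) (by omega)

end Lift
end BPDAux
namespace BPDAux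
open Tile

lemma we_of_ns (x : Tile) (hb : x ≠ Tile.bump) (h : x.north = x.south) :
    x.west = x.east := by
  cases x <;> simp_all [Tile.north, Tile.south, Tile.west, Tile.east]

lemma bpd_ext {n : ℕ} {B C : BPD n} (h : ∀ i j, B.tile i j = C.tile i j) : B = C := by
  obtain ⟨⟨t1, v1, h1, b1, r1, p1, l1, o1⟩, n1⟩ := B
  obtain ⟨⟨t2, v2, h2, b2, r2, p2, l2, o2⟩, n2⟩ := C
  have : t1 = t2 := funext fun i => funext fun j => h i j
  subst this
  rfl

section PhiSec
variable {n m : ℕ} (w : Equiv.Perm (Fin n)) (s t : Fin m ↪o Fin n) (u : Equiv.Perm (Fin m))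
  (B : BPD n)

/-- The removable pipes of `B ∈ BPD(w; v)`. -/
lemma inBPDv_rem (hB : B.InBPDv w s) {k : Fin n} (hk : k ∉ Set.range (s : Fin m → Fin n)) :
    B.toDiagram.RemovablePipe ((w k : Fin n) : ℕ) (k : ℕ) :=
  (hB.2 _ _).mpr ⟨k, hk, rfl, rfl⟩

/-- Vertical edge formula in a deleted column. -/
lemma FV (u : Equiv.Perm (Fin m)) (hst : ∀ i : Fin m, w (s i) = t (u i))
    (hB : B.InBPDv w s) {j : ℕ} (hj : j < n) (hcol : keptIdx t j = none) :
    ∀ i, i < n →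
      (B.tile i j).south = decide (((w.symm ⟨j, hj⟩ : Fin n) : ℕ) ≤ i) := by
  set k : Fin n := w.symm ⟨j, hj⟩ with hkdef
  have hk : k ∉ Set.range (s : Fin m → Fin n) :=
    deleted_row_of_deleted_col w s t u hst
      (fun b hb => keptIdx_none hcol b (by rw [hb]))
  have hrem := inBPDv_rem w s B hB hk
  have hwk : ((w k : Fin n) : ℕ) = j := by rw [hkdef, Equiv.apply_symm_apply]
  obtain ⟨_, hrel, _, huniq⟩ := hrem
  rw [hwk] at hrel huniq
  exact col_formula B j (k : ℕ) hj k.isLt hrel huniq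

/-- Horizontal edge formula in a deleted row. -/
lemma FH (hB : B.InBPDv w s) {i : ℕ} (hi : i < n) (hrow : keptIdx s i = none) :
    ∀ j, j < n →
      (B.tile i j).east = decide (((w ⟨i, hi⟩ : Fin n) : ℕ) ≤ j) := by
  have hrem := inBPDv_rem w s B hB (not_range_of_keptIdx_none s hi hrow)
  obtain ⟨_, hrel, huniq, _⟩ := hrem
  have hik : ((⟨i, hi⟩ : Fin n) : ℕ) = i := rfl
  rw [hik] at hrel huniq
  exact row_formula B i _ hi (w ⟨i, hi⟩).isLt hrel huniq

/-- Opposite edges agree at a deleted-row cell away from its elbow. -/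
lemma F_dr (hB : B.InBPDv w s) {i j : ℕ} (hi : i < n) (hj : j < n)
    (hrow : keptIdx s i = none) (hne : ((w ⟨i, hi⟩ : Fin n) : ℕ) ≠ j) :
    (B.tile i j).north = (B.tile i j).south := by
  have hwe : (B.tile i j).west = (B.tile i j).east := by
    rw [west_eq B i j hi hj, FH w s B hB hi hrow j hj]
    split
    · subst ‹j = 0›
      symm
      simp only [decide_eq_false_iff_not]
      omega
    · rw [FH w s B hB hi hrow (j-1) (by omega)]
      simp only [decide_eq_decide]
      omega
  exact ns_of_we _ (B.nobump _ _) hwe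

/-- Opposite edges agree at a deleted-column cell away from its elbow. -/
lemma F_dc (u : Equiv.Perm (Fin m)) (hst : ∀ i : Fin m, w (s i) = t (u i))
    (hB : B.InBPDv w s) {i j : ℕ} (hi : i < n) (hj : j < n)
    (hcol : keptIdx t j = none) (hne : ((w.symm ⟨j, hj⟩ : Fin n) : ℕ) ≠ i) :
    (B.tile i j).north = (B.tile i j).south := by
  rw [north_eq B i j hi hj, FV w s t B u hst hB hj hcol i hi]
  split
  · subst ‹i = 0›
    symm
    simp only [decide_eq_false_iff_not]
    omega
  · rw [FV w s t B u hst hB hj hcol (i-1) (by omega)]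
    simp only [decide_eq_decide]
    omega

/-- Vertical edge formula in a kept column. -/
lemma FVk (hst : ∀ i : Fin m, w (s i) = t (u i)) (hB : B.InBPDv w s)
    {j : ℕ} {b : Fin m} (hcol : keptIdx t j = some b) :
    ∀ i, i < n → (B.tile i j).south =
      (match kA s i with
        | some a => (B.tile ((s a : Fin n) : ℕ) j).south
        | none => false) := by
  have hj : j < n := by rw [← keptIdx_some hcol]; exact (t b).isLt
  intro i
  induction i with
  | zero =>
    intro hi
    rcases hrow : keptIdx s 0 with _ | a
    · have hne : ((w ⟨0, hi⟩ : Fin n) : ℕ) ≠ j := by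
        rw [← keptIdx_some hcol]
        exact w_del_ne_kept w s t u hst hi hrow b
      have hns := F_dr w s B hB hi hj hrow hne
      rw [kA_zero_of_not_kept (keptIdx_none hrow), ← hns,
        north_eq B 0 j hi hj, if_pos rfl]
    · have h0 : ((s a : Fin n) : ℕ) = 0 := keptIdx_some hrow
      rw [← h0, kA_self]
  | succ i ih =>
    intro hi
    rcases hrow : keptIdx s (i+1) with _ | a
    · have hne : ((w ⟨i+1, hi⟩ : Fin n) : ℕ) ≠ j := by
        rw [← keptIdx_some hcol]
        exact w_del_ne_kept w s t u hst hi hrow b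
      have hns := F_dr w s B hB hi hj hrow hne
      have h1 : (B.tile (i+1) j).south = (B.tile i j).south := by
        rw [← hns, north_eq B (i+1) j hi hj, if_neg (by omega)]
        rfl
      rw [h1, ih (by omega), kA_skip (show (0:ℕ) < i+1 by omega) (keptIdx_none hrow),
        show i + 1 - 1 = i from rfl]
    · have h0 : ((s a : Fin n) : ℕ) = i + 1 := keptIdx_some hrow
      rw [← h0, kA_self]

/-- Horizontal edge formula in a kept row. -/
lemma FHk (hst : ∀ i : Fin m, w (s i) = t (u i)) (hB : B.InBPDv w s)
    {i : ℕ} {a : Fin m} (hrow : keptIdx s i = some a) :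
    ∀ j, j < n → (B.tile i j).east =
      (match kA t j with
        | some b => (B.tile i ((t b : Fin n) : ℕ)).east
        | none => false) := by
  have hi : i < n := by rw [← keptIdx_some hrow]; exact (s a).isLt
  intro j
  induction j with
  | zero =>
    intro hj
    rcases hcol : keptIdx t 0 with _ | b
    · have hne : ((w.symm ⟨0, hj⟩ : Fin n) : ℕ) ≠ i := by
        intro he
        have h1 : (⟨i, hi⟩ : Fin n) = w.symm ⟨0, hj⟩ := Fin.val_injective he.symm
        have h2 : (⟨i, hi⟩ : Fin n) = s a := Fin.val_injective (keptIdx_some hrow).symm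
        have h3 : w (s a) = ⟨0, hj⟩ := by rw [← h2, h1, Equiv.apply_symm_apply]
        rw [hst] at h3
        exact keptIdx_none hcol (u a) (by rw [h3])
      have hns := F_dc w s t B u hst hB hi hj hcol hne
      have hwe := we_of_ns _ (B.nobump i 0) hns
      rw [kA_zero_of_not_kept (keptIdx_none hcol), ← hwe,
        west_eq B i 0 hi hj, if_pos rfl]
    · have h0 : ((t b : Fin n) : ℕ) = 0 := keptIdx_some hcol
      rw [← h0, kA_self]
  | succ j ih =>
    intro hj
    rcases hcol : keptIdx t (j+1) with _ | b
    · have hne : ((w.symm ⟨j+1, hj⟩ : Fin n) : ℕ) ≠ i := by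
        intro he
        have h1 : (⟨i, hi⟩ : Fin n) = w.symm ⟨j+1, hj⟩ := Fin.val_injective he.symm
        have h2 : (⟨i, hi⟩ : Fin n) = s a := Fin.val_injective (keptIdx_some hrow).symm
        have h3 : w (s a) = ⟨j+1, hj⟩ := by rw [← h2, h1, Equiv.apply_symm_apply]
        rw [hst] at h3
        exact keptIdx_none hcol (u a) (by rw [h3])
      have hns := F_dc w s t B u hst hB hi hj hcol hne
      have hwe := we_of_ns _ (B.nobump i (j+1)) hns
      have h1 : (B.tile i (j+1)).east = (B.tile i j).east := by
        rw [← hwe, west_eq B i (j+1) hi hj, if_neg (by omega)]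
        rfl
      rw [h1, ih (by omega), kA_skip (show (0:ℕ) < j+1 by omega) (keptIdx_none hcol),
        show j + 1 - 1 = j from rfl]
    · have h0 : ((t b : Fin n) : ℕ) = j + 1 := keptIdx_some hcol
      rw [← h0, kA_self]

end PhiSec
end BPDAux
namespace BPDAux
open Tile

section PhiDef
variable {n m : ℕ} (w : Equiv.Perm (Fin n)) (s t : Fin m ↪o Fin n) (u : Equiv.Perm (Fin m))
  (B : BPD n)

/-- The deletion of the removable pipes from `B ∈ BPD(w; v)`. -/
def Phi (hst : ∀ i : Fin m, w (s i) = t (u i)) (hB : B.InBPDv w s) : BPD m where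
  tile i j :=
    if h : i < m ∧ j < m then
      B.tile ((s ⟨i, h.1⟩ : Fin n) : ℕ) ((t ⟨j, h.2⟩ : Fin n) : ℕ)
    else .blank
  vmatch := by
    intro i j h1 h2
    beta_reduce
    rw [dif_pos (⟨by omega, h2⟩ : i < m ∧ j < m), dif_pos (⟨h1, h2⟩ : i + 1 < m ∧ j < m)]
    have hs0 : 0 < ((s ⟨i+1, h1⟩ : Fin n) : ℕ) := by
      have h := le_apply s ⟨i+1, h1⟩
      have h' : i + 1 ≤ ((s ⟨i+1, h1⟩ : Fin n) : ℕ) := h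
      omega
    rw [north_eq B _ _ (s ⟨i+1, h1⟩).isLt (t ⟨j, h2⟩).isLt, if_neg (by omega),
      FVk w s t u B hst hB (keptIdx_self t ⟨j, h2⟩) (((s ⟨i+1, h1⟩ : Fin n) : ℕ) - 1)
        (by have := (s ⟨i+1, h1⟩).isLt; omega)]
    have hka : kA s (((s ⟨i+1, h1⟩ : Fin n) : ℕ) - 1) = some ⟨i, by omega⟩ := by
      refine kA_eq_some_iff.mpr ⟨?_, ?_⟩
      · have : s ⟨i, by omega⟩ < s ⟨i+1, h1⟩ :=
          s.strictMono (by rw [Fin.lt_def]; show i < i + 1; omega)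
        rw [Fin.lt_def] at this
        omega
      · intro x hx
        have hlt : s x < s ⟨i+1, h1⟩ := by rw [Fin.lt_def]; omega
        have := s.lt_iff_lt.mp hlt
        rw [Fin.lt_def] at this
        have h' : (x : ℕ) < i + 1 := this
        rw [Fin.le_def]
        show (x : ℕ) ≤ i
        omega
    rw [hka]
  hmatch := by
    intro i j h1 h2
    beta_reduce
    rw [dif_pos (⟨h1, by omega⟩ : i < m ∧ j < m), dif_pos (⟨h1, h2⟩ : i < m ∧ j + 1 < m)]
    have ht0 : 0 < ((t ⟨j+1, h2⟩ : Fin n) : ℕ) := by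
      have h := le_apply t ⟨j+1, h2⟩
      have h' : j + 1 ≤ ((t ⟨j+1, h2⟩ : Fin n) : ℕ) := h
      omega
    rw [west_eq B _ _ (s ⟨i, h1⟩).isLt (t ⟨j+1, h2⟩).isLt, if_neg (by omega),
      FHk w s t u B hst hB (keptIdx_self s ⟨i, h1⟩) (((t ⟨j+1, h2⟩ : Fin n) : ℕ) - 1)
        (by have := (t ⟨j+1, h2⟩).isLt; omega)]
    have hka : kA t (((t ⟨j+1, h2⟩ : Fin n) : ℕ) - 1) = some ⟨j, by omega⟩ := by
      refine kA_eq_some_iff.mpr ⟨?_, ?_⟩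
      · have : t ⟨j, by omega⟩ < t ⟨j+1, h2⟩ :=
          t.strictMono (by rw [Fin.lt_def]; show j < j + 1; omega)
        rw [Fin.lt_def] at this
        omega
      · intro x hx
        have hlt : t x < t ⟨j+1, h2⟩ := by rw [Fin.lt_def]; omega
        have := t.lt_iff_lt.mp hlt
        rw [Fin.lt_def] at this
        have h' : (x : ℕ) < j + 1 := this
        rw [Fin.le_def]
        show (x : ℕ) ≤ j
        omega
    rw [hka]
  bottom := by
    intro j hj
    beta_reduce
    rw [dif_pos (⟨by omega, hj⟩ : m - 1 < m ∧ j < m)]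
    have h3 := FVk w s t u B hst hB (keptIdx_self t ⟨j, hj⟩) (n-1)
      (by have := (t ⟨j, hj⟩).isLt; omega)
    rw [B.bottom _ (t ⟨j, hj⟩).isLt,
      kA_top (by omega) (by have := (t ⟨j, hj⟩).isLt; omega)] at h3
    exact h3.symm
  right := by
    intro i hi
    beta_reduce
    rw [dif_pos (⟨hi, by omega⟩ : i < m ∧ m - 1 < m)]
    have h3 := FHk w s t u B hst hB (keptIdx_self s ⟨i, hi⟩) (n-1)
      (by have := (s ⟨i, hi⟩).isLt; omega)
    rw [B.right _ (s ⟨i, hi⟩).isLt,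
      kA_top (by omega) (by have := (s ⟨i, hi⟩).isLt; omega)] at h3
    exact h3.symm
  top := by
    intro j hj
    beta_reduce
    rw [dif_pos (⟨by omega, hj⟩ : 0 < m ∧ j < m)]
    rw [north_eq B _ _ (s ⟨0, by omega⟩).isLt (t ⟨j, hj⟩).isLt]
    split
    · rfl
    · rw [FVk w s t u B hst hB (keptIdx_self t ⟨j, hj⟩) _
        (by have := (s ⟨0, by omega⟩).isLt; omega)]
      have hka : kA s (((s ⟨0, by omega⟩ : Fin n) : ℕ) - 1) = none := by
        rcases hk : kA s (((s ⟨0, by omega⟩ : Fin n) : ℕ) - 1) with _ | x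
        · rfl
        · exfalso
          obtain ⟨hx, _⟩ := kA_eq_some_iff.mp hk
          have : s ⟨0, by omega⟩ ≤ s x := s.monotone (by rw [Fin.le_def]; show 0 ≤ (x:ℕ); omega)
          rw [Fin.le_def] at this
          omega
      rw [hka]
  left := by
    intro i hi
    beta_reduce
    rw [dif_pos (⟨hi, by omega⟩ : i < m ∧ 0 < m)]
    rw [west_eq B _ _ (s ⟨i, hi⟩).isLt (t ⟨0, by omega⟩).isLt]
    split
    · rfl
    · rw [FHk w s t u B hst hB (keptIdx_self s ⟨i, hi⟩) _
        (by have := (t ⟨0, by omega⟩).isLt; omega)]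
      have hka : kA t (((t ⟨0, by omega⟩ : Fin n) : ℕ) - 1) = none := by
        rcases hk : kA t (((t ⟨0, by omega⟩ : Fin n) : ℕ) - 1) with _ | x
        · rfl
        · exfalso
          obtain ⟨hx, _⟩ := kA_eq_some_iff.mp hk
          have : t ⟨0, by omega⟩ ≤ t x := t.monotone (by rw [Fin.le_def]; show 0 ≤ (x:ℕ); omega)
          rw [Fin.le_def] at this
          omega
      rw [hka]
  outside := by
    intro i j h
    beta_reduce
    rw [dif_neg (by tauto)]
  nobump := by
    intro i j hbump
    have hbump' : (if h : i < m ∧ j < m then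
        B.tile ((s ⟨i, h.1⟩ : Fin n) : ℕ) ((t ⟨j, h.2⟩ : Fin n) : ℕ)
      else Tile.blank) = Tile.bump := hbump
    by_cases h : i < m ∧ j < m
    · rw [dif_pos h] at hbump'
      exact B.nobump _ _ hbump'
    · rw [dif_neg h] at hbump'
      simp at hbump'

variable (hst : ∀ i : Fin m, w (s i) = t (u i)) (hB : B.InBPDv w s)

lemma phi_tile_eq (a b : Fin m) :
    (Phi w s t u B hst hB).tile (a : ℕ) (b : ℕ)
      = B.tile ((s a : Fin n) : ℕ) ((t b : Fin n) : ℕ) := by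
  show (if h : (a : ℕ) < m ∧ (b : ℕ) < m then _ else _) = _
  rw [dif_pos ⟨a.isLt, b.isLt⟩, Fin.eta, Fin.eta]

lemma EV_eq {i j : ℕ} (hi : i < n) (hj : j < n) :
    (B.tile i j).south = EVpsi w s t (Phi w s t u B hst hB) i j := by
  rcases hcol : keptIdx t j with _ | b
  · rw [EVpsi_eq_of_del w s t _ hj hcol, FV w s t B u hst hB hj hcol i hi]
  · rw [EVpsi_eq_of_kept w s t _ hcol, FVk w s t u B hst hB hcol i hi]
    rcases hka : kA s i with _ | a
    · rfl
    · dsimp only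
      rw [phi_tile_eq w s t u B hst hB a b, keptIdx_some hcol]
  
lemma EH_eq {i j : ℕ} (hi : i < n) (hj : j < n) :
    (B.tile i j).east = EHpsi w s t (Phi w s t u B hst hB) i j := by
  rcases hrow : keptIdx s i with _ | a
  · rw [EHpsi_eq_of_del w s t _ hi hrow, FH w s B hB hi hrow j hj]
  · rw [EHpsi_eq_of_kept w s t _ hrow, FHk w s t u B hst hB hrow j hj]
    rcases hka : kA t j with _ | b
    · rfl
    · dsimp only
      rw [phi_tile_eq w s t u B hst hB a b, keptIdx_some hrow]

lemma N_eq {i j : ℕ} (hi : i < n) (hj : j < n) :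
    (B.tile i j).north = Npsi w s t (Phi w s t u B hst hB) i j := by
  rw [north_eq B i j hi hj, Npsi]
  split
  · rfl
  · exact EV_eq w s t u B hst hB (by omega) hj

lemma W_eq {i j : ℕ} (hi : i < n) (hj : j < n) :
    (B.tile i j).west = Wpsi w s t (Phi w s t u B hst hB) i j := by
  rw [west_eq B i j hi hj, Wpsi]
  split
  · rfl
  · exact EH_eq w s t u B hst hB hi (by omega)

/-- Reconstruction: `B` is the insertion of its deletion. -/
lemma phi_psi : B = Psi w s t u (Phi w s t u B hst hB) hst := by
  refine bpd_ext fun i j => ?_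
  show B.tile i j = tpsi w s t (Phi w s t u B hst hB) i j
  by_cases h : i < n ∧ j < n
  · rw [tpsi, if_pos h]
    conv_lhs => rw [← mk4_tile (B.tile i j) (B.nobump i j)]
    rw [N_eq w s t u B hst hB h.1 h.2, EV_eq w s t u B hst hB h.1 h.2,
      W_eq w s t u B hst hB h.1 h.2, EH_eq w s t u B hst hB h.1 h.2]
  · rw [B.outside i j h, tpsi, if_neg h]

end PhiDef
end BPDAux
namespace BPDAux
open Tile

lemma rel_bounds {p : ℕ} (C : BPD p) {x y : ℕ} (h : C.tile x y = .relbow) :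
    x < p ∧ y < p := by
  by_contra hc
  rw [C.outside x y (by tauto)] at h
  simp at h

section Mem
variable {n m : ℕ} (w : Equiv.Perm (Fin n)) (s t : Fin m ↪o Fin n) (u : Equiv.Perm (Fin m))
  (B' : BPD m) (hst : ∀ i : Fin m, w (s i) = t (u i))

/-- The insertion has permutation `w`. -/
lemma psi_hasPerm (hu : B'.toDiagram.HasPerm u) :
    (Psi w s t u B' hst).toDiagram.HasPerm w := by
  intro x
  rcases hrow : keptIdx s (x : ℕ) with _ | a
  · exact psi_deleted_exit w s t u B' hst hrow
  · have hx : s a = x := Fin.val_injective (keptIdx_some hrow)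
    subst hx
    have := lift_exitsAt w s t u B' hst (hu a)
    rwa [← hst] at this
  
/-- The insertion lies in `BPD(w; v)`. -/
lemma psi_mem (hu : B'.toDiagram.HasPerm u) (hmin : B'.toDiagram.Minimal) :
    (Psi w s t u B' hst).InBPDv w s := by
  refine ⟨psi_hasPerm w s t u B' hst hu, fun y x => ⟨?_, ?_⟩⟩
  · -- removable pipes are the inserted pipes
    rintro ⟨hex, hrel, hrowu, hcolu⟩
    obtain ⟨hx, hy⟩ := rel_bounds _ hrel
    rcases hrowx : keptIdx s x with _ | a
    · by_cases hww : ((w ⟨x, hx⟩ : Fin n) : ℕ) = y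
      · exact ⟨⟨x, hx⟩, not_range_of_keptIdx_none s hx hrowx, rfl, hww.symm⟩
      · exact absurd hrel
          (psi_no_elbow w s t u B' hst hx hy (Or.inl hrowx) (fun _ => hww)).1
    · obtain rfl : ((s a : Fin n) : ℕ) = x := keptIdx_some hrowx
      rcases hcoly : keptIdx t y with _ | b
      · exact absurd hrel (psi_no_elbow w s t u B' hst (s a).isLt hy (Or.inr hcoly)
          (fun hd => absurd (keptIdx_self s a) (by rw [hd]; simp))).1
      · obtain rfl : ((t b : Fin n) : ℕ) = y := keptIdx_some hcoly
        exfalso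
        -- transfer removability to B' and contradict minimality
        have hrel' : B'.tile (a : ℕ) (b : ℕ) = .relbow := by
          rw [← psi_tile_kept w s t u B' hst a b]; exact hrel
        obtain ⟨x', hx', hex'⟩ := exists_exit B' (b : ℕ) b.isLt
        have hlift := lift_exitsAt w s t u B' hst (a := ⟨x', hx'⟩) hex'
        have huniq := exitsAt_unique hlift hex
        have hax : (⟨x', hx'⟩ : Fin m) = a :=
          s.injective (Fin.val_injective huniq)
        have hxa : x' = (a : ℕ) := congrArg Fin.val hax
        subst hxa
        refine hmin (b : ℕ) (a : ℕ) ⟨hex', hrel', ?_, ?_⟩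
        · intro j hj hrelj
          obtain ⟨_, hjm⟩ := rel_bounds _ hrelj
          have : (Psi w s t u B' hst).tile ((s a : Fin n) : ℕ)
              ((t ⟨j, hjm⟩ : Fin n) : ℕ) = .relbow := by
            rw [psi_tile_kept w s t u B' hst a ⟨j, hjm⟩]
            exact hrelj
          refine hrowu ((t ⟨j, hjm⟩ : Fin n) : ℕ) ?_ this
          intro he
          exact hj (congrArg Fin.val (t.injective (Fin.val_injective he)))
        · intro i hi hreli
          obtain ⟨him, _⟩ := rel_bounds _ hreli
          have : (Psi w s t u B' hst).tile ((s ⟨i, him⟩ : Fin n) : ℕ)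
              ((t b : Fin n) : ℕ) = .relbow := by
            rw [psi_tile_kept w s t u B' hst ⟨i, him⟩ b]
            exact hreli
          refine hcolu ((s ⟨i, him⟩ : Fin n) : ℕ) ?_ this
          intro he
          exact hi (congrArg Fin.val (s.injective (Fin.val_injective he)))
  · -- the inserted pipes are removable
    rintro ⟨k, hk, rfl, rfl⟩
    have hrow : keptIdx s (k : ℕ) = none :=
      keptIdx_eq_none fun a ha => hk ⟨a, Fin.val_injective ha⟩
    have hcolwk : keptIdx t ((w k : Fin n) : ℕ) = none := by
      refine keptIdx_eq_none fun b'' hb'' => ?_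
      exact deleted_col_of_deleted_row w s t u hst hk b'' (Fin.val_injective hb'')
    refine ⟨psi_deleted_exit w s t u B' hst hrow, ?_, ?_, ?_⟩
    · exact psi_tile_insert w s t u B' hst k.isLt (w k).isLt hrow (by rw [Fin.eta])
    · intro j hj hrel
      obtain ⟨_, hjn⟩ := rel_bounds _ hrel
      exact (psi_no_elbow w s t u B' hst k.isLt hjn (Or.inl hrow)
        (fun _ he => hj (by rw [Fin.eta] at he; exact he.symm))).1 hrel
    · intro i hi hrel
      obtain ⟨hin, _⟩ := rel_bounds _ hrel
      rcases hri : keptIdx s i with _ | a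
      · refine (psi_no_elbow w s t u B' hst hin (w k).isLt (Or.inl hri) (fun _ hww => ?_)).1 hrel
        have : (⟨i, hin⟩ : Fin n) = k := w.injective (Fin.val_injective hww)
        exact hi (congrArg Fin.val this)
      · exact (psi_no_elbow w s t u B' hst hin (w k).isLt (Or.inr hcolwk)
          (fun hd => by rw [hri] at hd; exact absurd hd (by simp))).1 hrel

end Mem
end BPDAux
namespace BPDAux
open Tile

section Mem2
variable {n m : ℕ} (w : Equiv.Perm (Fin n)) (s t : Fin m ↪o Fin n) (u : Equiv.Perm (Fin m))
  (B : BPD n)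

lemma phi_hasPerm (hst : ∀ i : Fin m, w (s i) = t (u i)) (hB : B.InBPDv w s) :
    (Phi w s t u B hst hB).toDiagram.HasPerm u := by
  intro a
  have hPsi := phi_psi w s t u B hst hB
  obtain ⟨x', hx', hex'⟩ :=
    exists_exit (Phi w s t u B hst hB) ((u a : Fin m) : ℕ) (u a).isLt
  have hlift := lift_exitsAt w s t u (Phi w s t u B hst hB) hst
    (b := u a) (a := ⟨x', hx'⟩) hex'
  rw [← hPsi] at hlift
  have hBperm := hB.1 (s a)
  rw [hst] at hBperm
  have huniq := exitsAt_unique hlift hBperm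
  have hax : (⟨x', hx'⟩ : Fin m) = a := s.injective (Fin.val_injective huniq)
  have hxa : x' = (a : ℕ) := congrArg Fin.val hax
  subst hxa
  exact hex'

lemma phi_minimal (hst : ∀ i : Fin m, w (s i) = t (u i)) (hB : B.InBPDv w s) :
    (Phi w s t u B hst hB).toDiagram.Minimal := by
  intro y x hrem
  obtain ⟨hex, hrel, hrowu, hcolu⟩ := hrem
  obtain ⟨hx, hy⟩ := rel_bounds _ hrel
  have hPsi := phi_psi w s t u B hst hB
  have hexB : B.toDiagram.ExitsAt ((t ⟨y, hy⟩ : Fin n) : ℕ) ((s ⟨x, hx⟩ : Fin n) : ℕ) := by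
    have := lift_exitsAt w s t u (Phi w s t u B hst hB) hst
      (b := ⟨y, hy⟩) (a := ⟨x, hx⟩) hex
    rwa [← hPsi] at this
  have hrelB : B.tile ((s ⟨x, hx⟩ : Fin n) : ℕ) ((t ⟨y, hy⟩ : Fin n) : ℕ) = .relbow :=
    (phi_tile_eq w s t u B hst hB ⟨x, hx⟩ ⟨y, hy⟩).symm.trans hrel
  have hrowB : ∀ j, j ≠ ((t ⟨y, hy⟩ : Fin n) : ℕ) →
      B.tile ((s ⟨x, hx⟩ : Fin n) : ℕ) j ≠ .relbow := by
    intro j hj hrelj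
    obtain ⟨_, hjn⟩ := rel_bounds _ hrelj
    rcases hcj : keptIdx t j with _ | b''
    · have hne := (psi_no_elbow w s t u (Phi w s t u B hst hB) hst
        (s ⟨x, hx⟩).isLt hjn (Or.inr hcj)
        (fun hd => absurd (keptIdx_self s ⟨x, hx⟩) (by rw [hd]; simp))).1
      rw [← hPsi] at hne
      exact hne hrelj
    · obtain rfl : ((t b'' : Fin n) : ℕ) = j := keptIdx_some hcj
      have h5 := (phi_tile_eq w s t u B hst hB ⟨x, hx⟩ b'').trans hrelj
      refine hrowu ((b'' : ℕ)) ?_ h5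
      intro he
      have : b'' = ⟨y, hy⟩ := Fin.val_injective he
      rw [this] at hj
      exact hj rfl
  have hcolB : ∀ i, i ≠ ((s ⟨x, hx⟩ : Fin n) : ℕ) →
      B.tile i ((t ⟨y, hy⟩ : Fin n) : ℕ) ≠ .relbow := by
    intro i hi hreli
    obtain ⟨hin, _⟩ := rel_bounds _ hreli
    rcases hri : keptIdx s i with _ | a''
    · have hne := (psi_no_elbow w s t u (Phi w s t u B hst hB) hst
        hin (t ⟨y, hy⟩).isLt (Or.inl hri)
        (fun _ => w_del_ne_kept w s t u hst hin hri ⟨y, hy⟩)).1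
      rw [← hPsi] at hne
      exact hne hreli
    · obtain rfl : ((s a'' : Fin n) : ℕ) = i := keptIdx_some hri
      have h5 := (phi_tile_eq w s t u B hst hB a'' ⟨y, hy⟩).trans hreli
      refine hcolu ((a'' : ℕ)) ?_ h5
      intro he
      have : a'' = ⟨x, hx⟩ := Fin.val_injective he
      rw [this] at hi
      exact hi rfl
  obtain ⟨k, hk, hxk, hyk⟩ := (hB.2 _ _).mp ⟨hexB, hrelB, hrowB, hcolB⟩
  exact hk ⟨⟨x, hx⟩, Fin.val_injective hxk⟩

end Mem2

section Inv
variable {n m : ℕ} (w : Equiv.Perm (Fin n)) (s t : Fin m ↪o Fin n) (u : Equiv.Perm (Fin m))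
  (B' : BPD m)

lemma phi_psi_inv (hst : ∀ i : Fin m, w (s i) = t (u i))
    (hu : B'.toDiagram.HasPerm u) (hmin : B'.toDiagram.Minimal) :
    Phi w s t u (Psi w s t u B' hst) hst (psi_mem w s t u B' hst hu hmin) = B' := by
  refine bpd_ext fun i j => ?_
  show (if h : i < m ∧ j < m then
      (Psi w s t u B' hst).tile ((s ⟨i, h.1⟩ : Fin n) : ℕ) ((t ⟨j, h.2⟩ : Fin n) : ℕ)
    else Tile.blank) = B'.tile i j
  by_cases h : i < m ∧ j < m
  · rw [dif_pos h, psi_tile_kept w s t u B' hst ⟨i, h.1⟩ ⟨j, h.2⟩]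
  · rw [dif_neg h, B'.outside i j h]

end Inv
end BPDAux

/-- Proposition `BPD_bij`.  Let `w ∈ S_n`, let `v ⊆ w` be a
subword of size `m` with index sequence `s` and entry sequence `t`, and set
`u := perm(v) ∈ S_m`.  Then the map `φ_v^w : BPD(w; v) → mBPD(u)`, sending `B`
to its `m × m` submatrix on rows `s` and columns `t`, is a bijection. -/
theorem removing_pipes_bijection {n m : ℕ} (w : Equiv.Perm (Fin n))
    (s t : Fin m ↪o Fin n) (u : Equiv.Perm (Fin m))
    (hst : ∀ i : Fin m, w (s i) = t (u i)) :
    ∃ e : {B : BPD n // B.InBPDv w s} ≃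
        {B' : BPD m // B'.toDiagram.HasPerm u ∧ B'.toDiagram.Minimal},
      ∀ (B : {B : BPD n // B.InBPDv w s}) (i j : Fin m),
        (e B : BPD m).tile i j = (B : BPD n).tile (s i) (t j) := by
  refine ⟨{
    toFun := fun B => ⟨BPDAux.Phi w s t u B.1 hst B.2,
      BPDAux.phi_hasPerm w s t u B.1 hst B.2, BPDAux.phi_minimal w s t u B.1 hst B.2⟩
    invFun := fun C => ⟨BPDAux.Psi w s t u C.1 hst,
      BPDAux.psi_mem w s t u C.1 hst C.2.1 C.2.2⟩
    left_inv := fun B => Subtype.ext (BPDAux.phi_psi w s t u B.1 hst B.2).symm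
    right_inv := fun C =>
      Subtype.ext (BPDAux.phi_psi_inv w s t u C.1 hst C.2.1 C.2.2) },
    fun B i j => ?_⟩
  exact BPDAux.phi_tile_eq w s t u B.1 hst B.2 i j
end
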